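/- arXiv:1812.08932 — 5 statements merged into one kernel-verified Lean document; each statement's English description precedes it below -/
import Mathlib

section
/- For every finite simple graph G with no isolated vertex on n vertices, the domination number γ(G) satisfies γ(G) ≤ n/2. -/
/-- `D` is a dominating set of `G`: every vertex not in `D` is adjacent to a vertex of `D`. -/
def IsDomSet {V : Type*} (G : SimpleGraph V) (D : Finset V) : Prop :=
  ∀ v, v ∉ D → ∃ u ∈ D, G.Adj u v

/-- The domination number of a finite graph. -/
noncomputable def domNum {V : Type*} [Fintype V] (G : SimpleGraph V) : ℕ :=
  sInf {k | ∃ D : Finset V, IsDomSet G D ∧ D.card = k}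

/-- Ore's theorem: a graph with no isolated vertex has domination number at most n/2. -/
theorem domNum_le_half_of_no_isolated {V : Type*} [Fintype V] (G : SimpleGraph V)
    (h : ∀ v : V, ∃ u : V, G.Adj v u) :
    2 * domNum G ≤ Fintype.card V := by
  classical
  set S : Set ℕ := {k | ∃ D : Finset V, IsDomSet G D ∧ D.card = k} with hS
  have hne : S.Nonempty := ⟨(Finset.univ : Finset V).card, Finset.univ,
    fun v hv => absurd (Finset.mem_univ v) hv, rfl⟩
  have hmem : domNum G ∈ S := Nat.sInf_mem hne
  obtain ⟨D, hD, hcard⟩ := hmem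
  -- complement is dominating
  have hcompl : IsDomSet G Dᶜ := by
    intro v hv
    have hvD : v ∈ D := by simpa using hv
    by_contra hno
    push_neg at hno
    -- every neighbor of v lies in D
    have hnb : ∀ u, G.Adj u v → u ∈ D := by
      intro u hu
      by_contra huD
      exact hno u (Finset.mem_compl.2 huD) hu
    -- then D.erase v is dominating
    have herase : IsDomSet G (D.erase v) := by
      intro w hw
      by_cases hwv : w = v
      · subst hwv
        obtain ⟨u, hu⟩ := h w
        have huD : u ∈ D := hnb u hu.symm
        have hune : u ≠ w := fun e => G.irrefl (e ▸ hu)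
        exact ⟨u, Finset.mem_erase.2 ⟨hune, huD⟩, hu.symm⟩
      · have hwD : w ∉ D := fun hwD => hw (Finset.mem_erase.2 ⟨hwv, hwD⟩)
        obtain ⟨u, huD, hu⟩ := hD w hwD
        have hune : u ≠ v := by
          rintro rfl
          exact hwD (hnb w hu.symm)
        exact ⟨u, Finset.mem_erase.2 ⟨hune, huD⟩, hu⟩
    have hle : domNum G ≤ (D.erase v).card := Nat.sInf_le ⟨D.erase v, herase, rfl⟩
    have : (D.erase v).card = D.card - 1 := Finset.card_erase_of_mem hvD
    have hpos : 0 < D.card := Finset.card_pos.2 ⟨v, hvD⟩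
    omega
  have hle2 : domNum G ≤ Dᶜ.card := Nat.sInf_le ⟨Dᶜ, hcompl, rfl⟩
  have hcc : Dᶜ.card = Fintype.card V - D.card := Finset.card_compl D
  have hDle : D.card ≤ Fintype.card V := Finset.card_le_univ D
  omega
end

section
/- If G is a finite connected simple graph on at least two vertices, then the least eigenvalue of the signless Laplacian satisfies q_min(G) < δ(G), where δ(G) is the minimum vertex degree of G. -/
open Matrix

def signlessLaplacian {V : Type*} [Fintype V] [DecidableEq V] (G : SimpleGraph V)
    [DecidableRel G.Adj] : Matrix V V ℝ :=
  Matrix.diagonal (fun v => (G.degree v : ℝ)) + G.adjMatrix ℝ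

noncomputable def leastEigenvalue {V : Type*} [Fintype V] (M : Matrix V V ℝ) : ℝ :=
  sInf {μ : ℝ | ∃ x : V → ℝ, x ≠ 0 ∧ M.mulVec x = μ • x}

section aux
variable {V : Type*} [Fintype V] [DecidableEq V]

lemma rayleigh_bdd (M : Matrix V V ℝ) (x : EuclideanSpace ℝ V) (hx : x ≠ 0) :
    -‖(LinearMap.toContinuousLinearMap (toEuclideanLin M))‖ ≤
      RCLike.re (inner (𝕜 := ℝ) (toEuclideanLin M x) x) / ‖x‖ ^ 2 := by
  set T := toEuclideanLin (𝕜 := ℝ) M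
  set C := ‖LinearMap.toContinuousLinearMap T‖
  have hxn : ‖x‖ ≠ 0 := norm_ne_zero_iff.2 hx
  have hxpos : (0:ℝ) < ‖x‖ ^ 2 := by positivity
  rw [le_div_iff₀ hxpos, RCLike.re_to_real]
  have h1 : |inner (𝕜 := ℝ) (T x) x| ≤ ‖T x‖ * ‖x‖ := abs_real_inner_le_norm _ _
  have h2 : ‖T x‖ ≤ C * ‖x‖ := (LinearMap.toContinuousLinearMap T).le_opNorm x
  nlinarith [neg_abs_le (inner (𝕜:=ℝ) (T x) x), norm_nonneg x, norm_nonneg (T x)]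

lemma rayleigh_of_mem (M : Matrix V V ℝ) {μ : ℝ} {x : V → ℝ} (hx : x ≠ 0)
    (h : M.mulVec x = μ • x) :
    ∃ y : EuclideanSpace ℝ V, y ≠ 0 ∧
      RCLike.re (inner (𝕜 := ℝ) (toEuclideanLin M y) y) / ‖y‖ ^ 2 = μ := by
  refine ⟨(WithLp.equiv 2 (V → ℝ)).symm x, by simpa using hx, ?_⟩
  set y : EuclideanSpace ℝ V := (WithLp.equiv 2 (V → ℝ)).symm x
  have hy : y ≠ 0 := by simpa [y] using hx
  have hT : toEuclideanLin M y = μ • y := by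
    rw [toEuclideanLin_apply]
    simp [y, h]
  rw [hT, real_inner_smul_left, real_inner_self_eq_norm_sq]
  have : ‖y‖ ^ 2 ≠ 0 := by
    have : ‖y‖ ≠ 0 := norm_ne_zero_iff.2 hy
    positivity
  field_simp
  exact RCLike.re_to_real

/-- Key lemma: the least eigenvalue is at most the Rayleigh quotient of any nonzero vector,
with strict inequality transferring. -/
lemma leastEigenvalue_le_rayleigh [Nonempty V] (M : Matrix V V ℝ) (hM : M.IsHermitian)
    (x : V → ℝ) (hx : x ≠ 0) :
    leastEigenvalue M ≤
      (∑ w, M.mulVec x w * x w) / (∑ w, x w * x w) := by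
  classical
  set T := toEuclideanLin (𝕜 := ℝ) M with hTdef
  have hsym : T.IsSymmetric := isHermitian_iff_isSymmetric.1 hM
  set f : {z : EuclideanSpace ℝ V // z ≠ 0} → ℝ :=
    fun z => RCLike.re (inner (𝕜 := ℝ) (T z) z) / ‖(z : EuclideanSpace ℝ V)‖ ^ 2 with hf
  have hbddf : BddBelow (Set.range f) := by
    refine ⟨-‖LinearMap.toContinuousLinearMap T‖, ?_⟩
    rintro _ ⟨z, rfl⟩
    exact rayleigh_bdd M z z.2
  haveI : Nontrivial (EuclideanSpace ℝ V) := by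
    refine nontrivial_of_ne ((WithLp.equiv 2 (V → ℝ)).symm x) 0 (by simpa using hx)
  set m : ℝ := ⨅ z : {z : EuclideanSpace ℝ V // z ≠ 0}, f z with hm
  have heig : Module.End.HasEigenvalue T (m : ℝ) := by
    exact hsym.hasEigenvalue_iInf_of_finiteDimensional
  obtain ⟨y, hy⟩ := heig.exists_hasEigenvector
  -- m is in the eigenvalue set
  have hmem : m ∈ {μ : ℝ | ∃ x : V → ℝ, x ≠ 0 ∧ M.mulVec x = μ • x} := by
    refine ⟨(WithLp.equiv 2 (V → ℝ)) y, by simpa using hy.right, ?_⟩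
    have := hy.apply_eq_smul
    have h2 : (WithLp.equiv 2 (V → ℝ)) (T y) = (WithLp.equiv 2 (V → ℝ)) (m • y) := by
      rw [this]
    simpa [hTdef, toEuclideanLin_apply] using h2
  -- the set is bounded below
  have hbddS : BddBelow {μ : ℝ | ∃ x : V → ℝ, x ≠ 0 ∧ M.mulVec x = μ • x} := by
    refine ⟨-‖LinearMap.toContinuousLinearMap T‖, ?_⟩
    rintro μ ⟨z, hz, hzeq⟩
    obtain ⟨w, hw, hwr⟩ := rayleigh_of_mem M hz hzeq
    rw [← hwr]
    exact rayleigh_bdd M w hw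
  have h1 : leastEigenvalue M ≤ m := csInf_le hbddS hmem
  -- m ≤ Rayleigh of x
  set x' : EuclideanSpace ℝ V := (WithLp.equiv 2 (V → ℝ)).symm x with hx'
  have hx'ne : x' ≠ 0 := by simpa [hx'] using hx
  have h2 : m ≤ f ⟨x', hx'ne⟩ := ciInf_le hbddf _
  refine h1.trans (h2.trans (le_of_eq ?_))
  -- compute f ⟨x', _⟩
  have hTx : T x' = (WithLp.equiv 2 (V → ℝ)).symm (M.mulVec x) := by
    rw [toEuclideanLin_apply]
    congr 1
  have hinner : inner (𝕜 := ℝ) (T x') x' = ∑ w, M.mulVec x w * x w := by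
    rw [hTx]
    rw [PiLp.inner_apply]
    simp [hx', mul_comm]
  have hnorm : ‖x'‖ ^ 2 = ∑ w, x w * x w := by
    rw [← real_inner_self_eq_norm_sq, PiLp.inner_apply]
    simp [hx', sq]
  simp only [hf, hinner, hnorm, RCLike.re_to_real]
end aux

/-- For a connected graph on at least two vertices, `q_min(G) < δ(G)`,
the minimum vertex degree. -/
theorem leastEigenvalue_lt_minDegree {V : Type*} [Fintype V] [DecidableEq V] [Nonempty V]
    (G : SimpleGraph V) [DecidableRel G.Adj] (hG : G.Connected)
    (hn : 2 ≤ Fintype.card V) :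
    leastEigenvalue (signlessLaplacian G) <
      (Finset.univ.inf' Finset.univ_nonempty fun v => (G.degree v : ℝ)) := by
  classical
  obtain ⟨v, -, hv⟩ := Finset.exists_mem_eq_inf'
    (Finset.univ_nonempty : (Finset.univ : Finset V).Nonempty) (fun v => (G.degree v : ℝ))
  rw [hv]
  -- get a neighbor of v
  obtain ⟨u, huv⟩ : ∃ u, G.Adj v u := by
    obtain ⟨w, hw⟩ := Fintype.exists_ne_of_one_lt_card hn v
    obtain ⟨p⟩ := hG.preconnected v w
    cases p with
    | nil => exact absurd rfl hw.symm
    | cons h q => exact ⟨_, h⟩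
  have hvu : v ≠ u := G.ne_of_adj huv
  set dv : ℝ := (G.degree v : ℝ) with hdv
  set du : ℝ := (G.degree u : ℝ) with hdu
  have hdv0 : 0 ≤ dv := by positivity
  have hdu0 : 0 ≤ du := by positivity
  have hdvu : dv ≤ du := by
    rw [← hv, hdu]
    exact Finset.inf'_le _ (Finset.mem_univ u)
  set b : ℝ := -(du + 1)⁻¹ with hb
  have hB : (0:ℝ) < du + 1 := by linarith
  have hbneg : b < 0 := by
    rw [hb]; simp only [neg_neg, Left.neg_neg_iff]; positivity
  set x : V → ℝ := fun w => (if w = v then 1 else 0) + (if w = u then b else 0) with hx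
  have hxv : x v = 1 := by simp [hx, hvu]
  have hxne : x ≠ 0 := by
    intro h
    have := congrFun h v
    rw [hxv] at this
    simp at this
  -- generic dot product with x
  have hdot : ∀ g : V → ℝ, ∑ w, g w * x w = g v + g u * b := by
    intro g
    simp only [hx, mul_add, Finset.sum_add_distrib, mul_ite, mul_one, mul_zero]
    rw [Finset.sum_ite_eq' Finset.univ v g, Finset.sum_ite_eq' Finset.univ u (fun w => g w * b)]
    simp
  set Q := signlessLaplacian G with hQ
  have hQsym : Q.IsHermitian := by
    rw [hQ]
    unfold signlessLaplacian
    refine (Matrix.isHermitian_diagonal_iff.2 ?_).add ?_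
    · intro i; exact isSelfAdjoint_iff.2 rfl
    · unfold Matrix.IsHermitian
      ext i j
      simp [Matrix.conjTranspose_apply, SimpleGraph.adjMatrix, G.adj_comm i j]
  -- entries
  have hQvv : Q v v = dv := by simp [hQ, signlessLaplacian, Matrix.add_apply, hdv]
  have hQuu : Q u u = du := by simp [hQ, signlessLaplacian, Matrix.add_apply, hdu]
  have hQvu : Q v u = 1 := by
    simp [hQ, signlessLaplacian, Matrix.add_apply, Matrix.diagonal_apply_ne _ hvu, huv]
  have hQuv : Q u v = 1 := by
    simp [hQ, signlessLaplacian, Matrix.add_apply, Matrix.diagonal_apply_ne _ hvu.symm,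
      huv.symm]
  have hmv : ∀ w, Q.mulVec x w = Q w v + Q w u * b := by
    intro w
    rw [Matrix.mulVec, dotProduct]
    exact hdot (fun z => Q w z)
  have hnum : ∑ w, Q.mulVec x w * x w = dv + 2 * b + du * b ^ 2 := by
    rw [hdot (fun w => Q.mulVec x w)]
    rw [hmv v, hmv u, hQvv, hQvu, hQuv, hQuu]
    ring
  have hden : ∑ w, x w * x w = 1 + b ^ 2 := by
    rw [hdot x, hxv]
    have hxu : x u = b := by simp [hx, hvu.symm]
    rw [hxu]; ring
  have hray := leastEigenvalue_le_rayleigh Q hQsym x hxne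
  rw [hnum, hden] at hray
  refine hray.trans_lt ?_
  rw [div_lt_iff₀ (by positivity)]
  -- dv + 2b + du b² < dv (1 + b²)
  have hbval : b * (du + 1) = -1 := by
    rw [hb]; field_simp
  nlinarith [sq_nonneg b, mul_pos (neg_pos.2 hbneg) hB]
end

section
/- Every connected nonbipartite graph G contains a connected nonbipartite unicyclic spanning subgraph H such that the odd-girth of H equals the odd-girth of G and γ(H) = γ(G). -/
/-- The odd-girth of a graph: the length of a shortest odd cycle. -/
noncomputable def oddGirth {V : Type*} (G : SimpleGraph V) : ℕ :=
  sInf {n | Odd n ∧ ∃ (v : V) (W : G.Walk v v), W.IsCycle ∧ W.length = n}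

section Helpers
open SimpleGraph
variable {V : Type*} {G : SimpleGraph V}


lemma end_mem_tail_support {a b : V} (p : G.Walk a b) (hp : ¬ p.Nil) :
    b ∈ p.support.tail := by
  cases p with
  | nil => simp at hp
  | cons h q => simpa using q.end_mem_support

lemma path_loop_eq_nil {a : V} (p : G.Walk a a) (hp : p.support.Nodup) : p.Nil := by
  by_contra h
  have := end_mem_tail_support p h
  rw [SimpleGraph.Walk.support_eq_cons] at hp
  exact (List.nodup_cons.mp hp).1 this

/-- every odd closed walk contains an odd cycle of no greater length -/
lemma exists_odd_cycle_of_odd_closed_walk [DecidableEq V] :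
    ∀ n, ∀ {u : V} (W : G.Walk u u), W.length = n → Odd n →
      ∃ (x : V) (C : G.Walk x x), C.IsCycle ∧ Odd C.length ∧ C.length ≤ n := by
  intro n
  induction n using Nat.strong_induction_on with
  | _ n ih =>
  intro u W hlen hodd
  have hn0 : n ≠ 0 := by rintro rfl; simp [Nat.odd_iff] at hodd
  have hWnil : ¬ W.Nil := by
    rw [SimpleGraph.Walk.nil_iff_length_eq, hlen]; exact hn0
  by_cases hnd : W.support.tail.Nodup
  · -- tail nodup case
    obtain ⟨w, h, Q, rfl⟩ := SimpleGraph.Walk.not_nil_iff.mp hWnil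
    have hQsupp : Q.support.Nodup := by simpa using hnd
    have hQpath : Q.IsPath := SimpleGraph.Walk.IsPath.mk' hQsupp
    by_cases he : s(u, w) ∈ Q.edges
    · -- contradiction with oddness
      exfalso
      have hn1 : n ≠ 1 := by
        rintro rfl
        have : Q.length = 0 := by simpa using hlen
        have := (SimpleGraph.Walk.nil_iff_length_eq.mpr this)
        have hw : w = u := this.eq
        subst hw
        exact G.irrefl h
      have hn3 : 3 ≤ n := by
        rcases hodd with ⟨k, rfl⟩; omega
      have hQR : Q.reverse.length = n - 1 := by
        simp [hlen.symm]
      have hQRnil : ¬ Q.reverse.Nil := by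
        rw [SimpleGraph.Walk.nil_iff_length_eq, hQR]; omega
      obtain ⟨z, h', Q₂, hQ2⟩ := SimpleGraph.Walk.not_nil_iff.mp hQRnil
      have heR : s(u, w) ∈ Q.reverse.edges := by
        rw [SimpleGraph.Walk.edges_reverse]; simpa using he
      have hQRsupp : Q.reverse.support.Nodup := by
        rw [SimpleGraph.Walk.support_reverse]; exact List.nodup_reverse.mpr hQsupp
      rw [hQ2] at heR hQRsupp
      simp only [SimpleGraph.Walk.edges_cons, List.mem_cons] at heR
      simp only [SimpleGraph.Walk.support_cons, List.nodup_cons] at hQRsupp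
      rcases heR with heq | hmem
      · -- s(u,w) = s(u,z) so w = z, Q₂ : w ⟶ w nontrivial path: contra
        have hwz : w = z := by
          have := Sym2.congr_right.mp heq
          exact this
        subst hwz
        have hQ2nodup : Q₂.support.Nodup := hQRsupp.2
        have := path_loop_eq_nil Q₂ hQ2nodup
        have hQ2len : Q₂.length = 0 := SimpleGraph.Walk.nil_iff_length_eq.mp this
        have : Q.reverse.length = 1 := by rw [hQ2]; simp [hQ2len]
        rw [hQR] at this; omega
      · exact hQRsupp.1 (Q₂.fst_mem_support_of_mem_edges hmem)
    · exact ⟨u, SimpleGraph.Walk.cons h Q,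
        (SimpleGraph.Walk.cons_isCycle_iff Q h).mpr ⟨hQpath, he⟩, by rw [hlen]; exact hodd,
        le_of_eq hlen⟩
  · -- duplicate vertex: split
    obtain ⟨z, hz⟩ : ∃ z, 2 ≤ W.support.tail.count z := by
      by_contra hc
      push_neg at hc
      exact hnd (List.nodup_iff_count_le_one.mpr fun a => by have := hc a; omega)
    have hzsupp : z ∈ W.support := by
      have : z ∈ W.support.tail := List.count_pos_iff.mp (by omega)
      rw [SimpleGraph.Walk.support_eq_cons]
      exact List.mem_cons_of_mem _ this
    set R := W.rotate z hzsupp with hR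
    have hRlen : R.length = n := by
      rw [hR]
      have := congrArg SimpleGraph.Walk.length (W.take_spec hzsupp)
      rw [SimpleGraph.Walk.length_append] at this
      unfold SimpleGraph.Walk.rotate
      rw [SimpleGraph.Walk.length_append]
      omega
    have hcount : 2 ≤ R.support.tail.count z := by
      have hrot := SimpleGraph.Walk.support_rotate W z hzsupp
      show 2 ≤ List.count z (W.rotate z hzsupp).support.tail
      rw [hrot.perm.count_eq]
      exact hz
    have hRnil : ¬ R.Nil := by
      rw [SimpleGraph.Walk.nil_iff_length_eq, hRlen]; exact hn0
    obtain ⟨w₁, h₁, Q₁, hRdef⟩ := SimpleGraph.Walk.not_nil_iff.mp hRnil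
    have hcount' : 2 ≤ Q₁.support.count z := by
      have : R.support.tail = Q₁.support := by rw [hRdef]; simp
      rwa [this] at hcount
    have hzQ : z ∈ Q₁.support := List.count_pos_iff.mp (by omega)
    have hsplit := Q₁.take_spec hzQ
    set A := Q₁.takeUntil z hzQ with hA
    set B := Q₁.dropUntil z hzQ with hB
    have hcntA : A.support.count z = 1 := Q₁.count_support_takeUntil_eq_one hzQ
    have hBlen : 1 ≤ B.length := by
      by_contra hb
      push_neg at hb
      interval_cases hbl : B.length
      · have : B.Nil := SimpleGraph.Walk.nil_iff_length_eq.mpr hbl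
        have hQA : Q₁.support.count z = A.support.count z + B.support.tail.count z := by
          rw [← hsplit, SimpleGraph.Walk.support_append, List.count_append]
        have : B.support.tail = [] := by
          rw [SimpleGraph.Walk.nil_iff_support_eq.mp this]; rfl
        rw [this] at hQA
        simp [hcntA] at hQA
        omega
    have hlen1 : (1 + A.length) + B.length = n := by
      have := congrArg SimpleGraph.Walk.length hsplit
      rw [SimpleGraph.Walk.length_append] at this
      have : A.length + B.length = Q₁.length := this
      have hq : Q₁.length + 1 = n := by
        rw [← hRlen, hRdef]; simp
      omega
    have hor : Odd (1 + A.length) ∨ Odd B.length := by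
      rw [Nat.odd_iff] at hodd ⊢
      rw [Nat.odd_iff]
      omega
    rcases hor with ho | ho
    · obtain ⟨x, C, h1, h2, h3⟩ :=
        ih (1 + A.length) (by omega) (SimpleGraph.Walk.cons h₁ A) (by simp [add_comm]) ho
      exact ⟨x, C, h1, h2, by omega⟩
    · obtain ⟨x, C, h1, h2, h3⟩ := ih B.length (by omega) B rfl ho
      exact ⟨x, C, h1, h2, by omega⟩


lemma exists_odd_closed_walk_of_not_colorable (hconn : G.Connected)
    (hnb : ¬ G.Colorable 2) : ∃ (u : V) (W : G.Walk u u), Odd W.length := by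
  by_contra hno
  push_neg at hno
  apply hnb
  have : Nonempty V := hconn.nonempty
  obtain ⟨r⟩ := this
  classical
  have hreach : ∀ v, Nonempty (G.Walk r v) := fun v => (hconn.preconnected r v)
  let c : V → Bool := fun v => (hreach v).some.length % 2 == 1
  have hvalid : ∀ {a b : V}, G.Adj a b → c a ≠ c b := by
    intro a b hab hc
    set p := (hreach a).some with hp
    set q := (hreach b).some with hq
    have hodd : Odd (p.append (SimpleGraph.Walk.cons hab q.reverse)).length := by
      rw [SimpleGraph.Walk.length_append, SimpleGraph.Walk.length_cons,
        SimpleGraph.Walk.length_reverse]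
      have hcc : (p.length % 2 == 1) = (q.length % 2 == 1) := hc
      rw [Nat.odd_iff]
      rcases Nat.even_or_odd p.length with hpe | hpe <;>
        rcases Nat.even_or_odd q.length with hqe | hqe <;>
        [skip; skip; skip; skip] <;>
        first
        | (rw [Nat.even_iff] at hpe hqe; omega)
        | (rw [Nat.odd_iff] at hpe hqe; omega)
        | (exfalso; revert hcc
           rw [Nat.even_iff] at *; rw [Nat.odd_iff] at *; simp_all)
    exact hno r _ hodd
  exact (SimpleGraph.Coloring.mk c hvalid).colorable.mono (by simp)


lemma end_mem_tail_supportX {a b : V} (p : G.Walk a b) (hp : ¬ p.Nil) :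
    b ∈ p.support.tail := by
  cases p with
  | nil => simp at hp
  | cons h q => simpa using q.end_mem_support

/-- membership in support equals membership in support.tail for nonnil closed walks -/
lemma mem_support_iff_mem_tail {u : V} (W : G.Walk u u) (hW : ¬ W.Nil) (x : V) :
    x ∈ W.support ↔ x ∈ W.support.tail := by
  constructor
  · intro hx
    rw [SimpleGraph.Walk.support_eq_cons] at hx
    rcases List.mem_cons.mp hx with rfl | h
    · exact end_mem_tail_supportX W hW
    · exact h
  · intro hx
    rw [SimpleGraph.Walk.support_eq_cons]
    exact List.mem_cons_of_mem _ hx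

lemma mem_support_rotate_iff [DecidableEq V] {u x : V} (W : G.Walk u u) (hW : ¬ W.Nil)
    (hx : x ∈ W.support) (z : V) : z ∈ (W.rotate x hx).support ↔ z ∈ W.support := by
  have hrotnil : ¬ (W.rotate x hx).Nil := by
    rw [SimpleGraph.Walk.nil_iff_length_eq] at hW ⊢
    have := congrArg SimpleGraph.Walk.length (W.take_spec hx)
    rw [SimpleGraph.Walk.length_append] at this
    unfold SimpleGraph.Walk.rotate
    rw [SimpleGraph.Walk.length_append]
    omega
  rw [mem_support_iff_mem_tail _ hW, mem_support_iff_mem_tail _ hrotnil]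
  exact (SimpleGraph.Walk.support_rotate W x hx).perm.mem_iff

lemma length_rotate' [DecidableEq V] {u x : V} (W : G.Walk u u) (hx : x ∈ W.support) :
    (W.rotate x hx).length = W.length := by
  have := congrArg SimpleGraph.Walk.length (W.take_spec hx)
  rw [SimpleGraph.Walk.length_append] at this
  unfold SimpleGraph.Walk.rotate
  rw [SimpleGraph.Walk.length_append]
  omega

lemma tail_toFinset_rotate [DecidableEq V] {u x : V} (W : G.Walk u u) (hx : x ∈ W.support) :
    (W.rotate x hx).support.tail.toFinset = W.support.tail.toFinset := by
  apply Finset.ext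
  intro z
  simp only [List.mem_toFinset]
  exact (SimpleGraph.Walk.support_rotate W x hx).perm.mem_iff

lemma mem_support_of_mem_edges' {a b x : V} (p : G.Walk a b) {e : Sym2 V}
    (he : e ∈ p.edges) (hx : x ∈ e) : x ∈ p.support := by
  induction e with
  | h u v =>
    rcases Sym2.mem_iff.mp hx with rfl | rfl
    · exact p.fst_mem_support_of_mem_edges he
    · exact p.snd_mem_support_of_mem_edges he

lemma cycle_append_comm {x y : V} {A : G.Walk x y} {B : G.Walk y x}
    (h : (A.append B).IsCycle) : (B.append A).IsCycle := by
  rw [SimpleGraph.Walk.isCycle_def] at h ⊢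
  obtain ⟨⟨ht⟩, hne, hnd⟩ := h
  refine ⟨⟨?_⟩, ?_, ?_⟩
  · rw [SimpleGraph.Walk.edges_append]
    rw [SimpleGraph.Walk.edges_append] at ht
    exact (List.perm_append_comm).nodup_iff.mpr ht
  · intro hcon
    have h1 : (B.append A).length = 0 := by rw [hcon]; rfl
    rw [SimpleGraph.Walk.length_append] at h1
    have h2 : (A.append B).length ≠ 0 := by
      intro hc
      apply hne
      cases hAB : A.append B with
      | nil => rfl
      | cons h q => rw [hAB] at hc; simp at hc
    rw [SimpleGraph.Walk.length_append] at h2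
    omega
  · rw [SimpleGraph.Walk.tail_support_append]
    rw [SimpleGraph.Walk.tail_support_append] at hnd
    exact (List.perm_append_comm).nodup_iff.mpr hnd

lemma edges_of_length_one {a b : V} (p : G.Walk a b) (hp : p.length = 1) :
    s(a, b) ∈ p.edges := by
  cases p with
  | nil => simp at hp
  | cons h q =>
    have : q.length = 0 := by simpa using hp
    have hb := SimpleGraph.Walk.eq_of_length_eq_zero this
    subst hb
    simp




lemma tail_support_of_length_one {a b : V} (p : G.Walk a b) (hp : p.length = 1) :
    p.support.tail = [b] := by
  have hlen : p.support.tail.length = 1 := by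
    have := SimpleGraph.Walk.length_support p
    have h2 : p.support.length = 2 := by omega
    have := List.length_tail (l := p.support)
    omega
  have hnil : ¬ p.Nil := by rw [SimpleGraph.Walk.nil_iff_length_eq, hp]; omega
  have hmem : b ∈ p.support.tail := end_mem_tail_supportX p hnil
  obtain ⟨c, hc⟩ := List.length_eq_one_iff.mp hlen
  rw [hc] at hmem ⊢
  simp at hmem
  rw [hmem]

lemma triangle_isCycle {a b c : V} (h1 : G.Adj a b) (h2 : G.Adj b c) (h3 : G.Adj c a)
    (hac : a ≠ c) :
    (SimpleGraph.Walk.cons h1 (SimpleGraph.Walk.cons h2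
      (SimpleGraph.Walk.cons h3 SimpleGraph.Walk.nil))).IsCycle := by
  have hab := h1.ne
  have hbc := h2.ne
  rw [SimpleGraph.Walk.isCycle_def]
  refine ⟨⟨?_⟩, by simp, ?_⟩
  · simp [Sym2.eq_iff]; tauto
  · simp; tauto

lemma surgery [DecidableEq V] {D : Finset V} {g : ℕ} {x y d : V}
    (hlb : ∀ (u : V) (W : G.Walk u u), Odd W.length → g ≤ W.length)
    (A : G.Walk x y) (B : G.Walk y x)
    (hcyc : (A.append B).IsCycle) (hlen : (A.append B).length = g)
    (hxy : x ≠ y)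
    (hA2 : A.length ≤ 2)
    (hd : d ∉ (A.append B).support)
    (hdx : G.Adj d x) (hdy : G.Adj d y) (hdD : d ∈ D)
    (hxD : x ∉ D) (hyD : y ∉ D)
    (hxN : ∀ u, s(u, x) ∈ (A.append B).edges → u ∉ D) :
    ∃ (z : V) (C' : G.Walk z z), C'.IsCycle ∧ C'.length = g ∧
      ((A.append B).support.tail.toFinset ∩ D).card <
        (C'.support.tail.toFinset ∩ D).card := by
  have hg3 : 3 ≤ g := hlen ▸ hcyc.three_le_length
  have hA1 : 1 ≤ A.length := by
    by_contra h
    push_neg at h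
    exact hxy (SimpleGraph.Walk.eq_of_length_eq_zero (p := A) (by omega))
  have hab : A.length + B.length = g := by
    rw [← hlen, SimpleGraph.Walk.length_append]
  have hAnil : ¬ A.Nil := by rw [SimpleGraph.Walk.nil_iff_length_eq]; omega
  have hBnil : ¬ B.Nil := by rw [SimpleGraph.Walk.nil_iff_length_eq]; omega
  have htail : (A.append B).support.tail = A.support.tail ++ B.support.tail :=
    SimpleGraph.Walk.tail_support_append A B
  have hnd : (A.support.tail ++ B.support.tail).Nodup := htail ▸ hcyc.support_nodup
  have hndA : A.support.tail.Nodup := (List.nodup_append.mp hnd).1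
  have hndB : B.support.tail.Nodup := (List.nodup_append.mp hnd).2.1
  have hdisj : ∀ a ∈ A.support.tail, a ∉ B.support.tail :=
    fun a ha hb => (List.nodup_append'.mp hnd).2.2 ha hb
  have hyA : y ∈ A.support.tail := end_mem_tail_supportX A hAnil
  have hyB : y ∉ B.support.tail := hdisj y hyA
  have hBsup : B.support = y :: B.support.tail := SimpleGraph.Walk.support_eq_cons B
  have hBnodup : B.support.Nodup := by rw [hBsup]; exact List.nodup_cons.mpr ⟨hyB, hndB⟩
  have hdB : d ∉ B.support := fun hc =>
    hd ((SimpleGraph.Walk.mem_support_append_iff A B).mpr (Or.inr hc))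
  have hdx' : d ≠ x := fun hc => hd (hc ▸ (A.append B).start_mem_support)
  have hdy' : d ≠ y := fun hc => hdB (hc ▸ B.start_mem_support)
  have hxB : x ∈ B.support := B.end_mem_support
  rcases (by omega : A.length = 1 ∨ A.length = 2) with ha1 | ha2
  · -- triangle case : g = 3
    have hxyadj : G.Adj x y :=
      SimpleGraph.Walk.edges_subset_edgeSet A (edges_of_length_one A ha1)
    set T := SimpleGraph.Walk.cons hdx (SimpleGraph.Walk.cons hxyadj
      (SimpleGraph.Walk.cons hdy.symm SimpleGraph.Walk.nil)) with hTdef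
    have hTlen : T.length = 3 := by simp [hTdef]
    have hTcyc : T.IsCycle := triangle_isCycle hdx hxyadj hdy.symm hdy'
    have hg3' : g = 3 := by
      have := hlb d T (by rw [hTlen]; exact ⟨1, rfl⟩)
      omega
    have hb2 : B.length = 2 := by omega
    obtain ⟨z, h1, B2, hBdef⟩ := SimpleGraph.Walk.not_nil_iff.mp hBnil
    have hB2len : B2.length = 1 := by
      have : B.length = B2.length + 1 := by rw [hBdef]; simp
      omega
    have hzx : s(z, x) ∈ B2.edges := edges_of_length_one B2 hB2len
    have hzD : z ∉ D := by
      apply hxN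
      rw [SimpleGraph.Walk.edges_append]
      apply List.mem_append_right
      rw [hBdef]
      simp only [SimpleGraph.Walk.edges_cons, List.mem_cons]
      exact Or.inr hzx
    have hBt : B.support.tail = [z, x] := by
      rw [hBdef]
      simp only [SimpleGraph.Walk.support_cons, List.tail_cons]
      rw [SimpleGraph.Walk.support_eq_cons B2, tail_support_of_length_one B2 hB2len]
    have hAt : A.support.tail = [y] := tail_support_of_length_one A ha1
    refine ⟨d, T, hTcyc, by rw [hTlen, hg3'], ?_⟩
    have hleft : ((A.append B).support.tail.toFinset ∩ D) = ∅ := by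
      apply Finset.eq_empty_of_forall_notMem
      intro u hu
      rw [Finset.mem_inter, List.mem_toFinset, htail, hAt, hBt] at hu
      obtain ⟨hu1, hu2⟩ := hu
      simp only [List.singleton_append, List.mem_cons, List.not_mem_nil, or_false] at hu1
      rcases hu1 with rfl | rfl | rfl
      · exact hyD hu2
      · exact hzD hu2
      · exact hxD hu2
    rw [hleft]
    simp only [Finset.card_empty]
    rw [Finset.card_pos]
    refine ⟨d, ?_⟩
    rw [Finset.mem_inter, List.mem_toFinset]
    constructor
    · simp [hTdef]
    · exact hdD
  · -- length-2 case : replace midpoint by d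
    obtain ⟨m, h1, A₂, hAdef⟩ := SimpleGraph.Walk.not_nil_iff.mp hAnil
    have hA2len : A₂.length = 1 := by
      have : A.length = A₂.length + 1 := by rw [hAdef]; simp
      omega
    have hmD : m ∉ D := by
      apply hxN
      rw [SimpleGraph.Walk.edges_append]
      apply List.mem_append_left
      rw [hAdef]
      simp only [SimpleGraph.Walk.edges_cons, List.mem_cons]
      left
      rw [Sym2.eq_swap]
    have hAt : A.support.tail = [m, y] := by
      rw [hAdef]
      simp only [SimpleGraph.Walk.support_cons, List.tail_cons]
      rw [SimpleGraph.Walk.support_eq_cons A₂, tail_support_of_length_one A₂ hA2len]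
    -- the new cycle
    set q := B.concat hdx.symm with hqdef
    set C' := SimpleGraph.Walk.cons hdy q with hC'def
    have hqsup : q.support = B.support ++ [d] := by
      rw [hqdef, SimpleGraph.Walk.support_concat]
    have hqedges : q.edges = B.edges ++ [s(x, d)] := by
      rw [hqdef, SimpleGraph.Walk.edges_concat, List.concat_eq_append]
    have hC'cyc : C'.IsCycle := by
      rw [hC'def]
      apply (SimpleGraph.Walk.cons_isCycle_iff q hdy).mpr
      constructor
      · apply SimpleGraph.Walk.IsPath.mk'
        rw [hqsup]
        rw [List.nodup_append']
        exact ⟨hBnodup, List.nodup_singleton d, fun a ha hb => by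
          simp only [List.mem_singleton] at hb
          exact hdB (hb ▸ ha)⟩
      · rw [hqedges]
        intro hc
        rcases List.mem_append.mp hc with hc | hc
        · exact hdB (mem_support_of_mem_edges' B hc (by simp))
        · simp only [List.mem_singleton] at hc
          rw [Sym2.eq_iff] at hc
          rcases hc with ⟨rfl, _⟩ | ⟨_, h2⟩
          · exact hdx' rfl
          · exact hxy h2.symm
    have hC'len : C'.length = g := by
      rw [hC'def, SimpleGraph.Walk.length_cons, hqdef, SimpleGraph.Walk.length_concat]
      omega
    refine ⟨d, C', hC'cyc, hC'len, ?_⟩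
    have hC't : C'.support.tail = B.support ++ [d] := by
      rw [hC'def]
      simp only [SimpleGraph.Walk.support_cons, List.tail_cons]
      exact hqsup
    have hBsupt : B.support.toFinset = insert y B.support.tail.toFinset := by
      rw [hBsup, List.toFinset_cons, List.tail_cons]
    have hmBt : m ∉ B.support.tail := hdisj m (by rw [hAt]; simp)
    have hmy : m ≠ y := by
      have : A.support.tail.Nodup := hndA
      rw [hAt] at this
      simp at this
      exact this
    have hdBt : d ∉ B.support.tail := fun hc => hdB (by rw [hBsup]; exact List.mem_cons_of_mem _ hc)
    -- compute both sides
    have hleft : (A.append B).support.tail.toFinset =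
        insert m (insert y B.support.tail.toFinset) := by
      rw [htail, hAt]
      ext u
      simp
      rw [hBsup, List.mem_cons, List.tail_cons]
      try tauto
    have hright : C'.support.tail.toFinset =
        insert d (insert y B.support.tail.toFinset) := by
      rw [hC't, hBsup]
      ext u
      simp
      rw [hBsup, List.mem_cons, List.tail_cons]
      try tauto
    rw [hleft, hright]
    rw [Finset.insert_inter_of_notMem hmD, Finset.insert_inter_of_mem hdD]
    apply Finset.card_lt_card
    rw [Finset.ssubset_iff_of_subset (Finset.subset_insert _ _)]
    refine ⟨d, Finset.mem_insert_self _ _, ?_⟩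
    rw [Finset.mem_inter]
    rintro ⟨hc, -⟩
    rcases Finset.mem_insert.mp hc with rfl | hc
    · exact hdy' rfl
    · exact hdBt (List.mem_toFinset.mp hc)

lemma no_collision [DecidableEq V] {D : Finset V} {g : ℕ} {u x y d : V}
    (hlb : ∀ (w : V) (W : G.Walk w w), Odd W.length → g ≤ W.length)
    (hgodd : Odd g)
    (C : G.Walk u u) (hC : C.IsCycle) (hClen : C.length = g)
    (hmax : ∀ (z : V) (C' : G.Walk z z), C'.IsCycle → C'.length = g →
      (C'.support.tail.toFinset ∩ D).card ≤ (C.support.tail.toFinset ∩ D).card)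
    (hx : x ∈ C.support) (hy : y ∈ C.support) (hxy : x ≠ y)
    (hxD : x ∉ D) (hyD : y ∉ D)
    (hxN : ∀ v, s(v, x) ∈ C.edges → v ∉ D) (hyN : ∀ v, s(v, y) ∈ C.edges → v ∉ D)
    (hd : d ∉ C.support) (hdD : d ∈ D) (hdx : G.Adj d x) (hdy : G.Adj d y) : False := by
  have hCnil : ¬ C.Nil := hC.not_nil
  set R := C.rotate x hx with hRdef
  have hRcyc : R.IsCycle := hC.rotate hx
  have hRlen : R.length = g := by rw [hRdef, length_rotate' C hx]; exact hClen
  have hRedges : ∀ e, e ∈ R.edges ↔ e ∈ C.edges := fun e =>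
    (SimpleGraph.Walk.rotate_edges C x hx).perm.mem_iff
  have hRsupp : ∀ z, z ∈ R.support ↔ z ∈ C.support := fun z =>
    mem_support_rotate_iff C hCnil hx z
  have hRcnt : R.support.tail.toFinset = C.support.tail.toFinset :=
    tail_toFinset_rotate C hx
  have hyR : y ∈ R.support := (hRsupp y).mpr hy
  set A := R.takeUntil y hyR with hAdef
  set B := R.dropUntil y hyR with hBdef
  have hsplit : A.append B = R := R.take_spec hyR
  have hlen' : A.length + B.length = g := by
    have := congrArg SimpleGraph.Walk.length hsplit
    rw [SimpleGraph.Walk.length_append] at this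
    omega
  have hA1 : 1 ≤ A.length := by
    by_contra h
    push_neg at h
    exact hxy (SimpleGraph.Walk.eq_of_length_eq_zero (p := A) (by omega))
  have hB1 : 1 ≤ B.length := by
    by_contra h
    push_neg at h
    exact hxy (SimpleGraph.Walk.eq_of_length_eq_zero (p := B) (by omega)).symm
  have hcycAB : (A.append B).IsCycle := by rw [hsplit]; exact hRcyc
  have hlenAB : (A.append B).length = g := by rw [hsplit]; exact hRlen
  have hdAB : d ∉ (A.append B).support := by rw [hsplit]; exact fun hc => hd ((hRsupp d).mp hc)
  have hedgesAB : ∀ e, e ∈ (A.append B).edges ↔ e ∈ C.edges := by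
    intro e; rw [hsplit]; exact hRedges e
  have hcntAB : (A.append B).support.tail.toFinset = C.support.tail.toFinset := by
    rw [hsplit]; exact hRcnt
  have hor : A.length ≤ 2 ∨ B.length ≤ 2 := by
    have hodd : Odd (A.length + 2) ∨ Odd (B.length + 2) := by
      rw [Nat.odd_iff] at hgodd ⊢
      rw [Nat.odd_iff]
      omega
    rcases hodd with ho | ho
    · have := hlb d (SimpleGraph.Walk.cons hdx (A.concat hdy.symm)) (by
        rw [SimpleGraph.Walk.length_cons, SimpleGraph.Walk.length_concat]
        rw [Nat.odd_iff] at ho ⊢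
        omega)
      rw [SimpleGraph.Walk.length_cons, SimpleGraph.Walk.length_concat] at this
      omega
    · have := hlb d (SimpleGraph.Walk.cons hdy (B.concat hdx.symm)) (by
        rw [SimpleGraph.Walk.length_cons, SimpleGraph.Walk.length_concat]
        rw [Nat.odd_iff] at ho ⊢
        omega)
      rw [SimpleGraph.Walk.length_cons, SimpleGraph.Walk.length_concat] at this
      omega
  rcases hor with hA | hB
  · obtain ⟨z, C', c1, c2, c3⟩ := surgery hlb A B hcycAB hlenAB hxy hA hdAB hdx hdy hdD hxD hyD
      (fun v hv => hxN v ((hedgesAB _).mp hv))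
    have := hmax z C' c1 c2
    rw [hcntAB] at c3
    omega
  · have hcycBA : (B.append A).IsCycle := cycle_append_comm hcycAB
    have hlenBA : (B.append A).length = g := by
      rw [SimpleGraph.Walk.length_append] at hlenAB ⊢
      omega
    have hdBA : d ∉ (B.append A).support := by
      rw [SimpleGraph.Walk.mem_support_append_iff] at hdAB ⊢
      tauto
    have hedgesBA : ∀ e, e ∈ (B.append A).edges ↔ e ∈ C.edges := by
      intro e
      rw [← hedgesAB e]
      rw [SimpleGraph.Walk.edges_append, SimpleGraph.Walk.edges_append,
        List.mem_append, List.mem_append]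
      tauto
    have hcntBA : (B.append A).support.tail.toFinset = C.support.tail.toFinset := by
      rw [← hcntAB]
      ext z
      rw [List.mem_toFinset, List.mem_toFinset, SimpleGraph.Walk.tail_support_append,
        SimpleGraph.Walk.tail_support_append, List.mem_append, List.mem_append]
      tauto
    obtain ⟨z, C', c1, c2, c3⟩ := surgery hlb B A hcycBA hlenBA (Ne.symm hxy) hB hdBA hdy hdx hdD
      hyD hxD (fun v hv => hyN v ((hedgesBA _).mp hv))
    have := hmax z C' c1 c2
    rw [hcntBA] at c3
    omega

lemma chord_mem_edges [DecidableEq V] {g : ℕ} {u x y : V}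
    (hlb : ∀ (w : V) (W : G.Walk w w), Odd W.length → g ≤ W.length)
    (hgodd : Odd g)
    (C : G.Walk u u) (hC : C.IsCycle) (hClen : C.length = g)
    (hx : x ∈ C.support) (hy : y ∈ C.support) (hadj : G.Adj x y) :
    s(x, y) ∈ C.edges := by
  have hCnil : ¬ C.Nil := hC.not_nil
  have hxy : x ≠ y := hadj.ne
  set R := C.rotate x hx with hRdef
  have hRlen : R.length = g := by rw [hRdef, length_rotate' C hx]; exact hClen
  have hRedges : ∀ e, e ∈ R.edges ↔ e ∈ C.edges := fun e =>
    (SimpleGraph.Walk.rotate_edges C x hx).perm.mem_iff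
  have hyR : y ∈ R.support := (mem_support_rotate_iff C hCnil hx y).mpr hy
  set A := R.takeUntil y hyR with hAdef
  set B := R.dropUntil y hyR with hBdef
  have hsplit : A.append B = R := R.take_spec hyR
  have hlen' : A.length + B.length = g := by
    have := congrArg SimpleGraph.Walk.length hsplit
    rw [SimpleGraph.Walk.length_append] at this
    omega
  have hA1 : 1 ≤ A.length := by
    by_contra h
    push_neg at h
    exact hxy (SimpleGraph.Walk.eq_of_length_eq_zero (p := A) (by omega))
  have hB1 : 1 ≤ B.length := by
    by_contra h
    push_neg at h
    exact hxy (SimpleGraph.Walk.eq_of_length_eq_zero (p := B) (by omega)).symm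
  have hor : A.length = 1 ∨ B.length = 1 := by
    have hodd : Odd (A.length + 1) ∨ Odd (B.length + 1) := by
      rw [Nat.odd_iff] at hgodd ⊢
      rw [Nat.odd_iff]
      omega
    rcases hodd with ho | ho
    · have := hlb x (A.concat hadj.symm) (by
        rw [SimpleGraph.Walk.length_concat]; exact ho)
      rw [SimpleGraph.Walk.length_concat] at this
      omega
    · have := hlb x (SimpleGraph.Walk.cons hadj B) (by
        rw [SimpleGraph.Walk.length_cons]; exact ho)
      rw [SimpleGraph.Walk.length_cons] at this
      omega
  rcases hor with h1 | h1
  · have := edges_of_length_one A h1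
    rw [← hRedges]
    rw [← hsplit, SimpleGraph.Walk.edges_append]
    exact List.mem_append_left _ this
  · have := edges_of_length_one B h1
    rw [← hRedges]
    rw [← hsplit, SimpleGraph.Walk.edges_append]
    rw [Sym2.eq_swap]
    exact List.mem_append_right _ this


def GoodCfg (G : SimpleGraph V) (D : Finset V) (W : Finset V) (E : Finset (Sym2 V)) : Prop :=
  (∀ e ∈ E, e ∈ G.edgeSet) ∧
  (∀ e ∈ E, ∀ x ∈ e, x ∈ W) ∧
  E.card = W.card ∧
  (∀ x ∈ W, ∀ y ∈ W, (SimpleGraph.fromEdgeSet (↑E : Set (Sym2 V))).Reachable x y) ∧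
  (∀ v ∈ W, v ∉ D → ∃ u ∈ D, u ∈ W ∧ s(u, v) ∈ E)

lemma walk_boundary {W : Finset V} [DecidableEq V] :
    ∀ {a b : V} (_ : G.Walk a b), a ∈ W → b ∉ W →
      ∃ x ∈ W, ∃ y, y ∉ W ∧ G.Adj x y := by
  intro a b p
  induction p with
  | nil => intro h1 h2; exact absurd h1 h2
  | @cons u v w h q ih =>
    intro h1 h2
    by_cases hm : v ∈ W
    · exact ih hm h2
    · exact ⟨u, h1, v, hm, h⟩

lemma exists_boundary [Fintype V] [DecidableEq V] (hpre : G.Preconnected) {W : Finset V}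
    (hne : W.Nonempty) (hproper : W ≠ Finset.univ) :
    ∃ x ∈ W, ∃ y, y ∉ W ∧ G.Adj x y := by
  obtain ⟨a, ha⟩ := hne
  obtain ⟨b, hb⟩ : ∃ b, b ∉ W := by
    by_contra hc
    push_neg at hc
    exact hproper (Finset.eq_univ_iff_forall.mpr hc)
  obtain ⟨p⟩ := hpre a b
  exact walk_boundary p ha hb

lemma reachable_insert_of_adj {E : Finset (Sym2 V)} {E' : Finset (Sym2 V)} (hEE : E ⊆ E') :
    ∀ {a b : V}, (SimpleGraph.fromEdgeSet (↑E : Set (Sym2 V))).Reachable a b →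
      (SimpleGraph.fromEdgeSet (↑E' : Set (Sym2 V))).Reachable a b := by
  intro a b h
  apply h.mono
  apply SimpleGraph.fromEdgeSet_mono
  exact_mod_cast hEE

lemma attach2 [DecidableEq V] {D W : Finset V} {E : Finset (Sym2 V)} {x y d : V}
    (hg : GoodCfg G D W E) (hx : x ∈ W) (hy : y ∉ W) (hd : d ∉ W) (hdy : d ≠ y)
    (haxy : G.Adj x y) (hady : G.Adj d y) (hdD : d ∈ D) :
    GoodCfg G D (insert d (insert y W)) (insert s(d,y) (insert s(x,y) E)) := by
  obtain ⟨hg1, hg2, hg3, hg4, hg5⟩ := hg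
  have hxyE : s(x,y) ∉ E := fun hc => hy (hg2 _ hc y (by simp))
  have hdyE : s(d,y) ∉ insert s(x,y) E := by
    intro hc
    rcases Finset.mem_insert.mp hc with hc | hc
    · rw [Sym2.eq_iff] at hc
      rcases hc with ⟨rfl, _⟩ | ⟨rfl, hc2⟩
      · exact hd hx
      · exact hdy rfl
    · exact hd (hg2 _ hc d (by simp))
  have hne : (x : V) ≠ y := haxy.ne
  refine ⟨?_, ?_, ?_, ?_, ?_⟩
  · intro e he
    rcases Finset.mem_insert.mp he with rfl | he
    · exact hady
    · rcases Finset.mem_insert.mp he with rfl | he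
      · exact haxy
      · exact hg1 e he
  · intro e he z hz
    rcases Finset.mem_insert.mp he with rfl | he
    · rcases Sym2.mem_iff.mp hz with rfl | rfl <;> simp
    · rcases Finset.mem_insert.mp he with rfl | he
      · rcases Sym2.mem_iff.mp hz with rfl | rfl <;> simp [hx]
      · have := hg2 e he z hz
        simp [this]
  · have hdW : d ∉ insert y W := by
      intro hc
      rcases Finset.mem_insert.mp hc with rfl | hc
      · exact hdy rfl
      · exact hd hc
    rw [Finset.card_insert_of_notMem hdyE, Finset.card_insert_of_notMem hxyE,
      Finset.card_insert_of_notMem hdW, Finset.card_insert_of_notMem hy, hg3]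
  · -- reachability
    set E' := insert s(d,y) (insert s(x,y) E) with hE'
    have hmono : ∀ {a b : V}, (SimpleGraph.fromEdgeSet (↑E : Set (Sym2 V))).Reachable a b →
        (SimpleGraph.fromEdgeSet (↑E' : Set (Sym2 V))).Reachable a b :=
      reachable_insert_of_adj
        (fun e he => Finset.mem_insert_of_mem (Finset.mem_insert_of_mem he))
    have hxyadj : (SimpleGraph.fromEdgeSet (↑E' : Set (Sym2 V))).Adj x y := by
      rw [SimpleGraph.fromEdgeSet_adj]
      exact ⟨by simp [hE'], hne⟩
    have hdyadj : (SimpleGraph.fromEdgeSet (↑E' : Set (Sym2 V))).Adj d y := by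
      rw [SimpleGraph.fromEdgeSet_adj]
      exact ⟨by simp [hE'], hdy⟩
    have key : ∀ a ∈ insert d (insert y W),
        (SimpleGraph.fromEdgeSet (↑E' : Set (Sym2 V))).Reachable a x := by
      intro a ha
      rcases Finset.mem_insert.mp ha with rfl | ha
      · exact (hdyadj.reachable).trans hxyadj.symm.reachable
      · rcases Finset.mem_insert.mp ha with rfl | ha
        · exact hxyadj.symm.reachable
        · exact hmono (hg4 a ha x hx)
    intro a ha b hb
    exact (key a ha).trans (key b hb).symm
  · -- domination
    intro v hv hvD
    rcases Finset.mem_insert.mp hv with rfl | hv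
    · exact absurd hdD hvD
    · rcases Finset.mem_insert.mp hv with rfl | hv
      · exact ⟨d, hdD, Finset.mem_insert_self _ _, Finset.mem_insert_self _ _⟩
      · obtain ⟨w, hw1, hw2, hw3⟩ := hg5 v hv hvD
        exact ⟨w, hw1, Finset.mem_insert_of_mem (Finset.mem_insert_of_mem hw2),
          Finset.mem_insert_of_mem (Finset.mem_insert_of_mem hw3)⟩

lemma attach1 [DecidableEq V] {D W : Finset V} {E : Finset (Sym2 V)} {x y : V}
    (hg : GoodCfg G D W E) (hx : x ∈ W) (hy : y ∉ W)
    (haxy : G.Adj x y) (hdom : y ∈ D ∨ x ∈ D) :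
    GoodCfg G D (insert y W) (insert s(x,y) E) := by
  obtain ⟨hg1, hg2, hg3, hg4, hg5⟩ := hg
  have hxyE : s(x,y) ∉ E := fun hc => hy (hg2 _ hc y (by simp))
  have hne : (x : V) ≠ y := haxy.ne
  refine ⟨?_, ?_, ?_, ?_, ?_⟩
  · intro e he
    rcases Finset.mem_insert.mp he with rfl | he
    · exact haxy
    · exact hg1 e he
  · intro e he z hz
    rcases Finset.mem_insert.mp he with rfl | he
    · rcases Sym2.mem_iff.mp hz with rfl | rfl <;> simp [hx]
    · have := hg2 e he z hz
      simp [this]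
  · rw [Finset.card_insert_of_notMem hxyE, Finset.card_insert_of_notMem hy, hg3]
  · set E' := insert s(x,y) E with hE'
    have hmono : ∀ {a b : V}, (SimpleGraph.fromEdgeSet (↑E : Set (Sym2 V))).Reachable a b →
        (SimpleGraph.fromEdgeSet (↑E' : Set (Sym2 V))).Reachable a b :=
      reachable_insert_of_adj (fun e he => Finset.mem_insert_of_mem he)
    have hxyadj : (SimpleGraph.fromEdgeSet (↑E' : Set (Sym2 V))).Adj x y := by
      rw [SimpleGraph.fromEdgeSet_adj]
      exact ⟨by simp [hE'], hne⟩
    have key : ∀ a ∈ insert y W,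
        (SimpleGraph.fromEdgeSet (↑E' : Set (Sym2 V))).Reachable a x := by
      intro a ha
      rcases Finset.mem_insert.mp ha with rfl | ha
      · exact hxyadj.symm.reachable
      · exact hmono (hg4 a ha x hx)
    intro a ha b hb
    exact (key a ha).trans (key b hb).symm
  · intro v hv hvD
    rcases Finset.mem_insert.mp hv with rfl | hv
    · rcases hdom with hvD' | hxD
      · exact absurd hvD' hvD
      · exact ⟨x, hxD, Finset.mem_insert_of_mem hx, Finset.mem_insert_self _ _⟩
    · obtain ⟨w, hw1, hw2, hw3⟩ := hg5 v hv hvD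
      exact ⟨w, hw1, Finset.mem_insert_of_mem hw2, Finset.mem_insert_of_mem hw3⟩

lemma step_lemma [Fintype V] [DecidableEq V] {D W : Finset V} {E : Finset (Sym2 V)}
    (hpre : G.Preconnected) (hD : IsDomSet G D)
    (hg : GoodCfg G D W E) (hne : W.Nonempty) (hproper : W ≠ Finset.univ) :
    ∃ W' E', GoodCfg G D W' E' ∧ E ⊆ E' ∧ W ⊆ W' ∧ W.card < W'.card := by
  obtain ⟨x, hx, y, hy, hadj⟩ := exists_boundary hpre hne hproper
  by_cases hyD : y ∈ D
  · refine ⟨insert y W, insert s(x,y) E, attach1 hg hx hy hadj (Or.inl hyD),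
      Finset.subset_insert _ _, Finset.subset_insert _ _, ?_⟩
    rw [Finset.card_insert_of_notMem hy]; omega
  · obtain ⟨d, hdD, hady⟩ := hD y hyD
    by_cases hdW : d ∈ W
    · refine ⟨insert y W, insert s(d,y) E, attach1 hg hdW hy hady (Or.inr hdD),
        Finset.subset_insert _ _, Finset.subset_insert _ _, ?_⟩
      rw [Finset.card_insert_of_notMem hy]; omega
    · refine ⟨insert d (insert y W), insert s(d,y) (insert s(x,y) E),
        attach2 hg hx hy hdW hady.ne hadj hady hdD,
        fun e he => Finset.mem_insert_of_mem (Finset.mem_insert_of_mem he),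
        fun v hv => Finset.mem_insert_of_mem (Finset.mem_insert_of_mem hv), ?_⟩
      have hdy : d ∉ insert y W := by
        intro hc
        rcases Finset.mem_insert.mp hc with rfl | hc
        · exact hady.ne rfl
        · exact hdW hc
      rw [Finset.card_insert_of_notMem hdy, Finset.card_insert_of_notMem hy]
      omega

lemma grow_lemma [Fintype V] [DecidableEq V] {D : Finset V}
    (hpre : G.Preconnected) (hD : IsDomSet G D) :
    ∀ n (W : Finset V) (E : Finset (Sym2 V)), (Finset.univ : Finset V).card - W.card = n →
      GoodCfg G D W E → W.Nonempty →
      ∃ E', GoodCfg G D Finset.univ E' ∧ E ⊆ E' := by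
  intro n
  induction n using Nat.strong_induction_on with
  | _ n ih =>
  intro W E hn hg hne
  by_cases hproper : W = Finset.univ
  · exact ⟨E, hproper ▸ hg, Finset.Subset.refl E⟩
  · obtain ⟨W', E', hg', hEE, hWW, hcard⟩ := step_lemma hpre hD hg hne hproper
    have hW'le : W'.card ≤ (Finset.univ : Finset V).card := Finset.card_le_card (Finset.subset_univ _)
    have hWlt : W.card < (Finset.univ : Finset V).card := by omega
    obtain ⟨E'', hg'', hEE'⟩ := ih ((Finset.univ : Finset V).card - W'.card) (by omega) W' E' rfl hg'
      (hne.mono hWW)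
    exact ⟨E'', hg'', hEE.trans hEE'⟩

lemma base_lemma [Fintype V] [DecidableEq V] {D : Finset V} {g : ℕ} {u : V}
    (hD : IsDomSet G D)
    (hlb : ∀ (w : V) (W : G.Walk w w), Odd W.length → g ≤ W.length)
    (hgodd : Odd g)
    (C : G.Walk u u) (hC : C.IsCycle) (hClen : C.length = g)
    (hmax : ∀ (z : V) (C' : G.Walk z z), C'.IsCycle → C'.length = g →
      (C'.support.tail.toFinset ∩ D).card ≤ (C.support.tail.toFinset ∩ D).card) :
    ∃ (W : Finset V) (E : Finset (Sym2 V)), GoodCfg G D W E ∧ W.Nonempty ∧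
      ∀ e ∈ C.edges, e ∈ E := by
  classical
  have hCnil : ¬ C.Nil := hC.not_nil
  set st := C.support.tail.toFinset with hstdef
  have hmem_st : ∀ a, a ∈ st ↔ a ∈ C.support := by
    intro a
    rw [hstdef, List.mem_toFinset]
    exact (mem_support_iff_mem_tail C hCnil a).symm
  set S := st.filter (fun v => v ∉ D ∧ ∀ w ∈ D, s(w, v) ∉ C.edges) with hSdef
  set f : V → V := fun v => if h : ∃ w, w ∈ D ∧ G.Adj w v then h.choose else v with hfdef
  have hfspec : ∀ v, v ∉ D → f v ∈ D ∧ G.Adj (f v) v := by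
    intro v hv
    have hex : ∃ w, w ∈ D ∧ G.Adj w v := by
      obtain ⟨w, hw1, hw2⟩ := hD v hv
      exact ⟨w, hw1, hw2⟩
    rw [hfdef]
    simp only [dif_pos hex]
    exact hex.choose_spec
  have hSst : S ⊆ st := Finset.filter_subset _ _
  have hSD : ∀ v ∈ S, v ∉ D := by
    intro v hv
    exact ((Finset.mem_filter.mp hv).2).1
  have hSN : ∀ v ∈ S, ∀ w ∈ D, s(w, v) ∉ C.edges := by
    intro v hv
    exact ((Finset.mem_filter.mp hv).2).2
  have hfD : ∀ v ∈ S, f v ∈ D := fun v hv => (hfspec v (hSD v hv)).1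
  have hfadj : ∀ v ∈ S, G.Adj (f v) v := fun v hv => (hfspec v (hSD v hv)).2
  have hfC : ∀ v ∈ S, f v ∉ C.support := by
    intro v hv hc
    have := chord_mem_edges hlb hgodd C hC hClen hc ((hmem_st v).mp (hSst hv)) (hfadj v hv)
    exact hSN v hv (f v) (hfD v hv) this
  have hinj : Set.InjOn f ↑S := by
    intro v hv w hw hfvw
    by_contra hne
    have hv' : v ∈ S := hv
    have hw' : w ∈ S := hw
    refine no_collision hlb hgodd C hC hClen hmax
      ((hmem_st v).mp (hSst hv')) ((hmem_st w).mp (hSst hw')) hne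
      (hSD v hv') (hSD w hw')
      (fun z hz => ?_) (fun z hz => ?_)
      (hfC v hv') (hfD v hv') (hfadj v hv') (hfvw ▸ hfadj w hw')
    · intro hzD
      exact hSN v hv' z hzD hz
    · intro hzD
      exact hSN w hw' z hzD hz
  set W : Finset V := st ∪ S.image f with hWdef
  set E : Finset (Sym2 V) := C.edges.toFinset ∪ S.image (fun v => s(v, f v)) with hEdef
  have hCeE : ∀ e ∈ C.edges, e ∈ E := by
    intro e he
    rw [hEdef]
    exact Finset.mem_union_left _ (List.mem_toFinset.mpr he)
  -- cards
  have hst_card : st.card = g := by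
    rw [hstdef]
    rw [List.toFinset_card_of_nodup hC.support_nodup]
    have := SimpleGraph.Walk.length_support C
    have := List.length_tail (l := C.support)
    omega
  have hedges_card : C.edges.toFinset.card = g := by
    rw [List.toFinset_card_of_nodup hC.isCircuit.isTrail.edges_nodup]
    rw [SimpleGraph.Walk.length_edges, hClen]
  have hdisj1 : Disjoint st (S.image f) := by
    rw [Finset.disjoint_left]
    intro a ha hb
    obtain ⟨v, hv, rfl⟩ := Finset.mem_image.mp hb
    exact hfC v hv ((hmem_st _).mp ha)
  have hdisj2 : Disjoint (C.edges.toFinset) (S.image (fun v => s(v, f v))) := by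
    rw [Finset.disjoint_left]
    intro e he hb
    obtain ⟨v, hv, rfl⟩ := Finset.mem_image.mp hb
    exact hfC v hv (mem_support_of_mem_edges' C (List.mem_toFinset.mp he) (by simp))
  have him1 : (S.image f).card = S.card := Finset.card_image_of_injOn hinj
  have him2 : (S.image (fun v => s(v, f v))).card = S.card := by
    apply Finset.card_image_of_injOn
    intro v hv w hw heq
    simp only at heq
    rw [Sym2.eq_iff] at heq
    rcases heq with ⟨h1, _⟩ | ⟨h1, h2⟩
    · exact h1
    · exfalso
      have : v ∈ C.support := (hmem_st v).mp (hSst hv)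
      rw [h1] at this
      exact hfC w hw this
  have hcard : E.card = W.card := by
    rw [hEdef, hWdef, Finset.card_union_of_disjoint hdisj2,
      Finset.card_union_of_disjoint hdisj1, hst_card, hedges_card, him1, him2]
  -- edges of G
  have hEG : ∀ e ∈ E, e ∈ G.edgeSet := by
    intro e he
    rcases Finset.mem_union.mp he with he | he
    · exact SimpleGraph.Walk.edges_subset_edgeSet C (List.mem_toFinset.mp he)
    · obtain ⟨v, hv, rfl⟩ := Finset.mem_image.mp he
      rw [SimpleGraph.mem_edgeSet]
      exact (hfadj v hv).symm
  -- endpoints in W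
  have hEW : ∀ e ∈ E, ∀ x ∈ e, x ∈ W := by
    intro e he x hx
    rcases Finset.mem_union.mp he with he | he
    · apply Finset.mem_union_left
      exact (hmem_st x).mpr (mem_support_of_mem_edges' C (List.mem_toFinset.mp he) hx)
    · obtain ⟨v, hv, rfl⟩ := Finset.mem_image.mp he
      rcases Sym2.mem_iff.mp hx with rfl | rfl
      · exact Finset.mem_union_left _ (hSst hv)
      · exact Finset.mem_union_right _ (Finset.mem_image_of_mem f hv)
  -- reachability
  have hCE : ∀ e ∈ C.edges, e ∈ (SimpleGraph.fromEdgeSet (↑E : Set (Sym2 V))).edgeSet := by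
    intro e he
    rw [SimpleGraph.edgeSet_fromEdgeSet]
    constructor
    · exact_mod_cast hCeE e he
    · exact SimpleGraph.not_isDiag_of_mem_edgeSet G
        (SimpleGraph.Walk.edges_subset_edgeSet C he)
  set CT := C.transfer (SimpleGraph.fromEdgeSet (↑E : Set (Sym2 V))) hCE with hCTdef
  have hCTsupp : CT.support = C.support := SimpleGraph.Walk.support_transfer _ _
  have hreach : ∀ a ∈ W, (SimpleGraph.fromEdgeSet (↑E : Set (Sym2 V))).Reachable u a := by
    have hsupp_case : ∀ a ∈ C.support,
        (SimpleGraph.fromEdgeSet (↑E : Set (Sym2 V))).Reachable u a := by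
      intro a ha
      have ha' : a ∈ CT.support := by rw [hCTsupp]; exact ha
      exact ⟨CT.takeUntil a ha'⟩
    intro a ha
    rcases Finset.mem_union.mp ha with ha | ha
    · exact hsupp_case a ((hmem_st a).mp ha)
    · obtain ⟨v, hv, rfl⟩ := Finset.mem_image.mp ha
      have hadj : (SimpleGraph.fromEdgeSet (↑E : Set (Sym2 V))).Adj v (f v) := by
        rw [SimpleGraph.fromEdgeSet_adj]
        refine ⟨?_, (hfadj v hv).ne'⟩
        exact_mod_cast Finset.mem_union_right _ (Finset.mem_image_of_mem _ hv)
      exact (hsupp_case v ((hmem_st v).mp (hSst hv))).trans hadj.reachable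
  -- conclusion
  refine ⟨W, E, ⟨hEG, hEW, hcard, ?_, ?_⟩, ?_, hCeE⟩
  · intro a ha b hb
    exact ((hreach a ha).symm).trans (hreach b hb)
  · -- domination
    intro v hv hvD
    rcases Finset.mem_union.mp hv with hv | hv
    · by_cases hvS : v ∈ S
      · refine ⟨f v, hfD v hvS, Finset.mem_union_right _ (Finset.mem_image_of_mem f hvS), ?_⟩
        rw [Sym2.eq_swap]
        exact Finset.mem_union_right _ (Finset.mem_image_of_mem _ hvS)
      · have : ¬ (v ∉ D ∧ ∀ w ∈ D, s(w, v) ∉ C.edges) := by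
          intro hc
          exact hvS (Finset.mem_filter.mpr ⟨hv, hc⟩)
        push_neg at this
        obtain ⟨w, hw1, hw2⟩ := this hvD
        refine ⟨w, hw1, ?_, Finset.mem_union_left _ (List.mem_toFinset.mpr hw2)⟩
        apply Finset.mem_union_left
        exact (hmem_st w).mpr (mem_support_of_mem_edges' C hw2 (by simp))
    · obtain ⟨w, hw, rfl⟩ := Finset.mem_image.mp hv
      exact absurd (hfD w hw) hvD
  · exact ⟨u, Finset.mem_union_left _ ((hmem_st u).mpr C.start_mem_support)⟩

end Helpers

/-- Every connected nonbipartite graph `G` contains a connected nonbipartite unicyclic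
spanning subgraph `H` with the same odd-girth and the same domination number as `G`. -/
theorem exists_unicyclic_spanning_subgraph {V : Type*} [Fintype V] (G : SimpleGraph V)
    (hconn : G.Connected) (hnb : ¬ G.Colorable 2) :
    ∃ H : SimpleGraph V, H ≤ G ∧ H.Connected ∧ ¬ H.Colorable 2 ∧
      H.edgeSet.ncard = Fintype.card V ∧
      oddGirth H = oddGirth G ∧ domNum H = domNum G := by
  classical
  -- a minimum dominating set
  have hDne : {k | ∃ D : Finset V, IsDomSet G D ∧ D.card = k}.Nonempty :=
    ⟨(Finset.univ : Finset V).card, Finset.univ,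
      fun v hv => absurd (Finset.mem_univ v) hv, rfl⟩
  obtain ⟨D, hD, hDcard⟩ : ∃ D : Finset V, IsDomSet G D ∧ D.card = domNum G :=
    Nat.sInf_mem hDne
  -- odd cycles exist
  obtain ⟨u₀, W₀, hW₀odd⟩ := exists_odd_closed_walk_of_not_colorable hconn hnb
  obtain ⟨x₀, C₀, hC₀cyc, hC₀odd, _⟩ :=
    exists_odd_cycle_of_odd_closed_walk W₀.length W₀ rfl hW₀odd
  have hOCne : {n | Odd n ∧ ∃ (v : V) (W : G.Walk v v), W.IsCycle ∧ W.length = n}.Nonempty :=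
    ⟨C₀.length, hC₀odd, x₀, C₀, hC₀cyc, rfl⟩
  obtain ⟨hgodd, u₁, C₁, hC₁cyc, hC₁len⟩ :
      Odd (oddGirth G) ∧ ∃ (v : V) (W : G.Walk v v), W.IsCycle ∧ W.length = oddGirth G :=
    Nat.sInf_mem hOCne
  set g := oddGirth G with hgdef
  have hlb : ∀ (w : V) (W : G.Walk w w), Odd W.length → g ≤ W.length := by
    intro w W hodd
    obtain ⟨x, C, h1, h2, h3⟩ := exists_odd_cycle_of_odd_closed_walk W.length W rfl hodd
    have : g ≤ C.length := Nat.sInf_le ⟨h2, x, C, h1, rfl⟩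
    omega
  -- a shortest odd cycle maximizing the intersection with D
  have hKne : {k | ∃ (z : V) (C' : G.Walk z z), C'.IsCycle ∧ C'.length = g ∧
      (C'.support.tail.toFinset ∩ D).card = k}.Nonempty :=
    ⟨_, u₁, C₁, hC₁cyc, hC₁len, rfl⟩
  have hKbdd : BddAbove {k | ∃ (z : V) (C' : G.Walk z z), C'.IsCycle ∧ C'.length = g ∧
      (C'.support.tail.toFinset ∩ D).card = k} := by
    refine ⟨D.card, ?_⟩
    rintro k ⟨z, C', _, _, rfl⟩
    exact Finset.card_le_card (Finset.inter_subset_right)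
  obtain ⟨z₀, C, hCcyc, hClen, hCcnt⟩ := Nat.sSup_mem hKne hKbdd
  have hmax : ∀ (z : V) (C' : G.Walk z z), C'.IsCycle → C'.length = g →
      (C'.support.tail.toFinset ∩ D).card ≤ (C.support.tail.toFinset ∩ D).card := by
    intro z C' h1 h2
    rw [hCcnt]
    exact le_csSup hKbdd ⟨z, C', h1, h2, rfl⟩
  -- build the configuration
  obtain ⟨W₁, E₀, hgood₀, hne₀, hCE₀⟩ := base_lemma hD hlb hgodd C hCcyc hClen hmax
  obtain ⟨E, hgood, hE₀E⟩ := grow_lemma hconn.preconnected hD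
    ((Finset.univ : Finset V).card - W₁.card) W₁ E₀ rfl hgood₀ hne₀
  set H := SimpleGraph.fromEdgeSet (↑E : Set (Sym2 V)) with hHdef
  obtain ⟨hEG, hEW, hcard, hreach, hdom⟩ := hgood
  have hHle : H ≤ G := by
    intro a b hab
    rw [hHdef, SimpleGraph.fromEdgeSet_adj] at hab
    exact (SimpleGraph.mem_edgeSet G).mp (hEG _ (by exact_mod_cast hab.1))
  have hHconn : H.Connected := by
    rw [SimpleGraph.connected_iff]
    exact ⟨fun a b => hreach a (Finset.mem_univ a) b (Finset.mem_univ b),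
      hconn.nonempty⟩
  -- transfer the cycle C into H
  have hCEH : ∀ e ∈ C.edges, e ∈ H.edgeSet := by
    intro e he
    rw [hHdef, SimpleGraph.edgeSet_fromEdgeSet]
    constructor
    · exact_mod_cast hE₀E (hCE₀ e he)
    · exact SimpleGraph.not_isDiag_of_mem_edgeSet G
        (SimpleGraph.Walk.edges_subset_edgeSet C he)
  set CH := C.transfer H hCEH with hCHdef
  have hCHcyc : CH.IsCycle := hCcyc.transfer hCEH
  have hCHlen : CH.length = g := by rw [hCHdef, SimpleGraph.Walk.length_transfer]; exact hClen
  have hCHodd : Odd CH.length := by rw [hCHlen]; exact hgodd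
  have hHnb : ¬ H.Colorable 2 := by
    intro hcol
    have h3 := SimpleGraph.Walk.three_le_chromaticNumber_of_odd_loop CH hCHodd
    have h2 := hcol.chromaticNumber_le
    have := h3.trans h2
    norm_num at this
  have hedgecount : H.edgeSet.ncard = Fintype.card V := by
    have hEq : H.edgeSet = (↑E : Set (Sym2 V)) := by
      rw [hHdef, SimpleGraph.edgeSet_fromEdgeSet]
      ext e
      simp only [Set.mem_diff, Set.mem_setOf_eq, Finset.coe_sort_coe, Finset.mem_coe,
        and_iff_left_iff_imp]
      intro he
      exact SimpleGraph.not_isDiag_of_mem_edgeSet G (hEG e he)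
    rw [hEq, Set.ncard_coe_finset, hcard, Finset.card_univ]
  have hHOCne : {n | Odd n ∧ ∃ (v : V) (W : H.Walk v v), W.IsCycle ∧ W.length = n}.Nonempty :=
    ⟨g, hgodd, z₀, CH, hCHcyc, hCHlen⟩
  have hog : oddGirth H = oddGirth G := by
    apply le_antisymm
    · exact Nat.sInf_le ⟨hgodd, z₀, CH, hCHcyc, hCHlen⟩
    · obtain ⟨hodd', z', C', hcyc', hlen'⟩ :
          Odd (oddGirth H) ∧ ∃ (v : V) (W : H.Walk v v), W.IsCycle ∧ W.length = oddGirth H :=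
        Nat.sInf_mem hHOCne
      apply Nat.sInf_le
      refine ⟨hodd', z', C'.mapLe hHle, (SimpleGraph.Walk.mapLe_isCycle hHle).mpr hcyc', ?_⟩
      rw [SimpleGraph.Walk.mapLe, SimpleGraph.Walk.length_map]
      exact hlen'
  have hdomnum : domNum H = domNum G := by
    apply le_antisymm
    · apply Nat.sInf_le
      refine ⟨D, ?_, hDcard⟩
      intro v hv
      obtain ⟨w, hw1, _, hw3⟩ := hdom v (Finset.mem_univ v) hv
      refine ⟨w, hw1, ?_⟩
      rw [hHdef, SimpleGraph.fromEdgeSet_adj]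
      exact ⟨by exact_mod_cast hw3, ((SimpleGraph.mem_edgeSet G).mp (hEG _ hw3)).ne⟩
    · have hHDne : {k | ∃ DH : Finset V, IsDomSet H DH ∧ DH.card = k}.Nonempty :=
        ⟨(Finset.univ : Finset V).card, Finset.univ,
          fun v hv => absurd (Finset.mem_univ v) hv, rfl⟩
      obtain ⟨DH, hDH, hDHcard⟩ : ∃ DH : Finset V, IsDomSet H DH ∧ DH.card = domNum H :=
        Nat.sInf_mem hHDne
      rw [← hDHcard]
      apply Nat.sInf_le
      exact ⟨DH, fun v hv => (hDH v hv).imp (fun w hw => ⟨hw.1, hHle hw.2⟩), rfl⟩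
  exact ⟨H, hHle, hHconn, hHnb, hedgecount, hog, hdomnum⟩
end

section
/- Let G be a connected graph containing a bipartite branch H with root v_s (i.e., G = G₁(v_s) ⋄ H(v_s) with H bipartite), and let X be an eigenvector of the signless Laplacian Q(G) corresponding to the least eigenvalue q_min(G). If the coordinate x_s of X at the root equals 0, then x_p = 0 for every vertex p of H. -/
section Rayleigh

open scoped Matrix

variable {V : Type*} [Fintype V] [DecidableEq V]

private lemma inner_dot (a b : EuclideanSpace ℝ V) :
    (inner ℝ a b : ℝ) = ∑ i, a i * b i := by
  simp [PiLp.inner_apply, RCLike.inner_apply, mul_comm]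

private lemma repr_mulVec (M : Matrix V V ℝ) (hM : M.IsHermitian)
    (z : EuclideanSpace ℝ V) (i : V) :
    hM.eigenvectorBasis.repr (WithLp.toLp 2 (M.mulVec z : V → ℝ) : EuclideanSpace ℝ V) i
      = hM.eigenvalues i * hM.eigenvectorBasis.repr z i := by
  have hMT : M.transpose = M := by
    rw [← Matrix.conjTranspose_eq_transpose_of_trivial]; exact hM
  rw [OrthonormalBasis.repr_apply_apply, OrthonormalBasis.repr_apply_apply,
    inner_dot, inner_dot]
  have hsymdot : ∀ a c : V → ℝ, ∑ j, a j * (M.mulVec c) j = ∑ j, (M.mulVec a) j * c j := by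
    intro a c
    show a ⬝ᵥ M.mulVec c = M.mulVec a ⬝ᵥ c
    rw [Matrix.dotProduct_mulVec, ← Matrix.mulVec_transpose, hMT]
  have key0 : M.mulVec (fun j => hM.eigenvectorBasis i j)
      = fun j => hM.eigenvalues i * hM.eigenvectorBasis i j := by
    have h := hM.mulVec_eigenvectorBasis i
    funext j
    exact congrFun h j
  rw [hsymdot (fun j => hM.eigenvectorBasis i j) z, key0, Finset.mul_sum]
  exact Finset.sum_congr rfl fun j _ => by ring

private lemma rayleigh_min (M : Matrix V V ℝ) (hM : M.IsHermitian) (y : V → ℝ) :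
    leastEigenvalue M * (∑ i, y i * y i) ≤ ∑ i, y i * (M.mulVec y) i ∧
      (∑ i, y i * (M.mulVec y) i = leastEigenvalue M * (∑ i, y i * y i) →
        M.mulVec y = leastEigenvalue M • y) := by
  classical
  set S := {μ : ℝ | ∃ x : V → ℝ, x ≠ 0 ∧ M.mulVec x = μ • x} with hS
  have hqS : leastEigenvalue M = sInf S := rfl
  -- every eigenvalue is in S
  have hmem : ∀ i : V, hM.eigenvalues i ∈ S := by
    intro i
    refine ⟨hM.eigenvectorBasis i, ?_, hM.mulVec_eigenvectorBasis i⟩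
    intro h
    have h0 : hM.eigenvectorBasis i = (0 : EuclideanSpace ℝ V) := by simpa using h
    exact hM.eigenvectorBasis.orthonormal.ne_zero i h0
  -- S is contained in the range of the eigenvalues
  have hsub : S ⊆ Set.range hM.eigenvalues := by
    rintro μ ⟨z, hz, hzM⟩
    have hz' : (WithLp.toLp 2 z : EuclideanSpace ℝ V) ≠ 0 := fun h => hz (by simpa using h)
    have hc : hM.eigenvectorBasis.repr (WithLp.toLp 2 z : EuclideanSpace ℝ V) ≠ 0 := by
      intro h
      exact hz' (by simpa using hM.eigenvectorBasis.repr.map_eq_zero_iff.mp h)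
    obtain ⟨i, hi⟩ : ∃ i, hM.eigenvectorBasis.repr (WithLp.toLp 2 z : EuclideanSpace ℝ V) i ≠ 0 := by
      by_contra! hall; exact hc (PiLp.ext hall)
    refine ⟨i, ?_⟩
    have e1 := repr_mulVec M hM (WithLp.toLp 2 z : EuclideanSpace ℝ V) i
    have e2 : (WithLp.toLp 2 (M.mulVec z : V → ℝ) : EuclideanSpace ℝ V)
        = μ • (WithLp.toLp 2 z : EuclideanSpace ℝ V) := congrArg (WithLp.toLp 2) hzM
    rw [e2, map_smul] at e1
    have e3 : μ * hM.eigenvectorBasis.repr (WithLp.toLp 2 z : EuclideanSpace ℝ V) i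
        = hM.eigenvalues i * hM.eigenvectorBasis.repr (WithLp.toLp 2 z : EuclideanSpace ℝ V) i := e1
    exact mul_right_cancel₀ (by simpa using hi) e3.symm
  have hbdd : BddBelow S := BddBelow.mono hsub (Set.finite_range _).bddBelow
  have hqle : ∀ i, leastEigenvalue M ≤ hM.eigenvalues i := fun i =>
    hqS ▸ csInf_le hbdd (hmem i)
  set c := hM.eigenvectorBasis.repr (WithLp.toLp 2 y : EuclideanSpace ℝ V) with hcdef
  have hyy : ∑ i, y i * y i = ∑ i, c i * c i := by
    have h := hM.eigenvectorBasis.repr.inner_map_map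
      (WithLp.toLp 2 y : EuclideanSpace ℝ V) (WithLp.toLp 2 y : EuclideanSpace ℝ V)
    rw [inner_dot, inner_dot] at h
    exact h.symm
  have hyMy : ∑ i, y i * (M.mulVec y) i = ∑ i, hM.eigenvalues i * (c i * c i) := by
    have h := hM.eigenvectorBasis.repr.inner_map_map
      (WithLp.toLp 2 y : EuclideanSpace ℝ V) (WithLp.toLp 2 (M.mulVec y : V → ℝ) : EuclideanSpace ℝ V)
    rw [inner_dot, inner_dot] at h
    rw [← h]
    refine Finset.sum_congr rfl fun i _ => ?_
    rw [repr_mulVec M hM]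
    ring
  constructor
  · rw [hyy, hyMy, Finset.mul_sum]
    exact Finset.sum_le_sum fun i _ =>
      mul_le_mul_of_nonneg_right (hqle i) (mul_self_nonneg _)
  · intro heq
    rw [hyy, hyMy, Finset.mul_sum] at heq
    have hzero : ∀ i ∈ Finset.univ, (hM.eigenvalues i - leastEigenvalue M) * (c i * c i) = 0 := by
      apply (Finset.sum_eq_zero_iff_of_nonneg ?_).1
      · rw [Finset.sum_congr rfl (fun i _ => by ring :
          ∀ i ∈ Finset.univ, (hM.eigenvalues i - leastEigenvalue M) * (c i * c i)
            = hM.eigenvalues i * (c i * c i) - leastEigenvalue M * (c i * c i)),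
          Finset.sum_sub_distrib, heq, sub_self]
      · intro i _
        exact mul_nonneg (by linarith [hqle i]) (mul_self_nonneg _)
    have hrep : ∀ i, hM.eigenvalues i * c i = leastEigenvalue M * c i := by
      intro i
      rcases mul_eq_zero.1 (hzero i (Finset.mem_univ i)) with h | h
      · have : hM.eigenvalues i = leastEigenvalue M := by linarith
        rw [this]
      · rw [mul_self_eq_zero.1 h, mul_zero, mul_zero]
    have hfin : hM.eigenvectorBasis.repr (WithLp.toLp 2 (M.mulVec y : V → ℝ) : EuclideanSpace ℝ V)
        = hM.eigenvectorBasis.repr (WithLp.toLp 2 (leastEigenvalue M • y : V → ℝ) : EuclideanSpace ℝ V) := by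
      have e2 : (WithLp.toLp 2 (leastEigenvalue M • y : V → ℝ) : EuclideanSpace ℝ V)
          = leastEigenvalue M • (WithLp.toLp 2 y : EuclideanSpace ℝ V) := rfl
      rw [e2, map_smul]
      ext i
      rw [repr_mulVec M hM]
      simpa using hrep i
    exact WithLp.toLp_injective 2 (hM.eigenvectorBasis.repr.injective hfin)

end Rayleigh

/-- If `G` has a bipartite branch with vertex set `B` and root `s` (no edges leave
`B \ {s}`), and `X` is an eigenvector for the least eigenvalue of `Q(G)` with `x_s = 0`,
then `X` vanishes on all of the branch. -/
theorem zero_branch {V : Type*} [Fintype V] [DecidableEq V] (G : SimpleGraph V)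
    [DecidableRel G.Adj] (hconn : G.Connected)
    (B : Set V) (s : V) (hs : s ∈ B)
    (hbranch : ∀ u ∈ B, u ≠ s → ∀ w ∉ B, ¬ G.Adj u w)
    (hbip : (G.induce B).Colorable 2)
    (x : V → ℝ) (hx : x ≠ 0)
    (hev : (signlessLaplacian G).mulVec x = leastEigenvalue (signlessLaplacian G) • x)
    (hxs : x s = 0) :
    ∀ p ∈ B, x p = 0 := by
  classical
  set Q := signlessLaplacian G with hQdef
  set q := leastEigenvalue Q with hqdef
  have hQ : Q.IsHermitian := by
    rw [Matrix.IsHermitian, Matrix.conjTranspose_eq_transpose_of_trivial, hQdef,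
      signlessLaplacian, Matrix.transpose_add, Matrix.diagonal_transpose,
      SimpleGraph.transpose_adjMatrix]
  obtain ⟨C⟩ := hbip
  set ε : V → ℝ := fun v => if h : v ∈ B then (if C ⟨v, h⟩ = 0 then 1 else -1) else 1
    with hεdef
  have hε1 : ∀ v, ε v = 1 ∨ ε v = -1 := by
    intro v
    by_cases h : v ∈ B
    · simp only [hεdef, dif_pos h]; split <;> simp
    · simp [hεdef, h]
  have hεadj : ∀ v (hv : v ∈ B) u (hu : u ∈ B), G.Adj v u → ε u = - ε v := by
    intro v hv u hu hadj
    have hne : C ⟨v, hv⟩ ≠ C ⟨u, hu⟩ := C.valid hadj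
    simp only [hεdef, dif_pos hv, dif_pos hu]
    have h2 : ∀ a b : Fin 2, a ≠ b →
        ((if b = 0 then (1 : ℝ) else -1) = - if a = 0 then 1 else -1) := by
      intro a b hab
      fin_cases a <;> fin_cases b <;> simp_all
    exact h2 _ _ hne
  -- the action of Q on vectors
  have hQmul : ∀ (w : V → ℝ) (v : V),
      (Q.mulVec w) v = (G.degree v : ℝ) * w v + ∑ u ∈ G.neighborFinset v, w u := by
    intro w v
    rw [hQdef, signlessLaplacian, Matrix.add_mulVec]
    simp [Matrix.mulVec_diagonal]
  -- symmetry of neighbor sums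
  have hswap : ∀ f : V → V → ℝ,
      ∑ v, ∑ u ∈ G.neighborFinset v, f v u = ∑ v, ∑ u ∈ G.neighborFinset v, f u v := by
    intro f
    simp only [SimpleGraph.neighborFinset_eq_filter, Finset.sum_filter]
    rw [Finset.sum_comm]
    refine Finset.sum_congr rfl fun v _ => Finset.sum_congr rfl fun u _ => ?_
    by_cases h : G.Adj u v
    · rw [if_pos h, if_pos h.symm]
    · rw [if_neg h, if_neg fun hc => h hc.symm]
  -- the quadratic form of Q as a sum over (ordered) edges
  have hquad : ∀ w : V → ℝ,
      ∑ v, ∑ u ∈ G.neighborFinset v, (w v + w u) ^ 2 = 2 * ∑ v, w v * (Q.mulVec w) v := by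
    intro w
    have expand : ∀ v, ∑ u ∈ G.neighborFinset v, (w v + w u) ^ 2
        = (G.degree v : ℝ) * w v ^ 2 + (∑ u ∈ G.neighborFinset v, w u ^ 2)
          + 2 * w v * ∑ u ∈ G.neighborFinset v, w u := by
      intro v
      rw [Finset.sum_congr rfl (fun u _ => by ring :
        ∀ u ∈ G.neighborFinset v, (w v + w u) ^ 2
          = w v ^ 2 + (w u ^ 2 + 2 * w v * w u)),
        Finset.sum_add_distrib, Finset.sum_add_distrib, Finset.sum_const,
        G.card_neighborFinset_eq_degree, ← Finset.mul_sum]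
      push_cast
      ring
    have h2 : ∑ v, ∑ u ∈ G.neighborFinset v, w u ^ 2
        = ∑ v, (G.degree v : ℝ) * w v ^ 2 := by
      refine (hswap fun v u => w u ^ 2).trans ?_
      show ∑ v, ∑ _u ∈ G.neighborFinset v, w v ^ 2 = _
      exact Finset.sum_congr rfl fun v _ => by
        rw [Finset.sum_const, G.card_neighborFinset_eq_degree, nsmul_eq_mul]
    rw [Finset.sum_congr rfl fun v _ => expand v]
    rw [Finset.sum_add_distrib, Finset.sum_add_distrib, h2]
    rw [Finset.sum_congr rfl (fun v _ => by rw [hQmul w v] :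
      ∀ v ∈ Finset.univ, w v * Q.mulVec w v
        = w v * ((G.degree v : ℝ) * w v + ∑ u ∈ G.neighborFinset v, w u))]
    rw [Finset.sum_congr rfl (fun v _ => by ring :
      ∀ v ∈ Finset.univ, w v * ((G.degree v : ℝ) * w v + ∑ u ∈ G.neighborFinset v, w u)
        = (G.degree v : ℝ) * w v ^ 2 + w v * ∑ u ∈ G.neighborFinset v, w u)]
    rw [Finset.sum_add_distrib]
    rw [Finset.sum_congr rfl (fun v _ => by ring :
      ∀ v ∈ Finset.univ, 2 * w v * ∑ u ∈ G.neighborFinset v, w u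
        = 2 * (w v * ∑ u ∈ G.neighborFinset v, w u)), ← Finset.mul_sum]
    ring
  have hxQx : ∑ v, x v * (Q.mulVec x) v = q * ∑ v, x v * x v := by
    rw [hev, Finset.mul_sum]
    exact Finset.sum_congr rfl fun v _ => by
      simp [Pi.smul_apply, smul_eq_mul]; ring
  -- main step: for either sign σ, x has the sign pattern σ·ε·|x| on B
  have main : ∀ σ : ℝ, (σ = 1 ∨ σ = -1) → ∀ p ∈ B, x p = σ * ε p * |x p| := by
    intro σ hσ
    have hσsq : σ * σ = 1 := by rcases hσ with h | h <;> rw [h] <;> norm_num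
    set y : V → ℝ := fun v => if v ∈ B then σ * ε v * |x v| else x v with hy
    have hyB : ∀ v ∈ B, y v = σ * ε v * |x v| := fun v hv => by simp [hy, hv]
    have hyout : ∀ v, v ∉ B → y v = x v := fun v hv => by simp [hy, hv]
    have hys : y s = 0 := by rw [hyB s hs, hxs]; simp
    have hyabs : ∀ v, y v * y v = x v * x v := by
      intro v
      by_cases h : v ∈ B
      · rw [hyB v h]
        have hεsq : ε v * ε v = 1 := by rcases hε1 v with h' | h' <;> rw [h'] <;> norm_num
        have habs : |x v| * |x v| = x v * x v := by
          rw [← abs_mul, abs_mul_self]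
        calc σ * ε v * |x v| * (σ * ε v * |x v|)
            = (σ * σ) * (ε v * ε v) * (|x v| * |x v|) := by ring
          _ = x v * x v := by rw [hσsq, hεsq, habs]; ring
      · rw [hyout v h]
    have hedge : ∀ v u, G.Adj v u → (y v + y u) ^ 2 ≤ (x v + x u) ^ 2 := by
      intro v u hadj
      by_cases hv : v ∈ B <;> by_cases hu : u ∈ B
      · have hεu : ε u = - ε v := hεadj v hv u hu hadj
        rw [hyB v hv, hyB u hu, hεu]
        have hεsq : ε v * ε v = 1 := by rcases hε1 v with h' | h' <;> rw [h'] <;> norm_num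
        have h1 : (σ * ε v * |x v| + σ * -ε v * |x u|) ^ 2 = (|x v| - |x u|) ^ 2 := by
          have : (σ * ε v * |x v| + σ * -ε v * |x u|) ^ 2
              = (σ * σ) * (ε v * ε v) * (|x v| - |x u|) ^ 2 := by ring
          rw [this, hσsq, hεsq]; ring
        rw [h1]
        have habs : |x v| * |x u| = |x v * x u| := (abs_mul _ _).symm
        have hneg : -(x v * x u) ≤ |x v * x u| := neg_le_abs _
        nlinarith [sq_abs (x v), sq_abs (x u)]
      · have hvs : v = s := by
          by_contra hne
          exact hbranch v hv hne u hu hadj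
        have hxv : x v = 0 := hvs ▸ hxs
        have hyv : y v = 0 := by rw [hyB v hv, hxv]; simp
        rw [hyv, hxv, hyout u hu]
      · have hus : u = s := by
          by_contra hne
          exact hbranch u hu hne v hv hadj.symm
        have hxu : x u = 0 := hus ▸ hxs
        have hyu : y u = 0 := by rw [hyB u hu, hxu]; simp
        rw [hyu, hxu, hyout v hv]
      · rw [hyout v hv, hyout u hu]
    obtain ⟨hlow, heqcase⟩ := rayleigh_min Q hQ y
    have hEle : ∑ v, ∑ u ∈ G.neighborFinset v, (y v + y u) ^ 2
        ≤ ∑ v, ∑ u ∈ G.neighborFinset v, (x v + x u) ^ 2 :=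
      Finset.sum_le_sum fun v _ => Finset.sum_le_sum fun u hu =>
        hedge v u ((G.mem_neighborFinset _ _).1 hu)
    have hyQy_le : ∑ v, y v * (Q.mulVec y) v ≤ ∑ v, x v * (Q.mulVec x) v := by
      have h1 := hquad y
      have h2 := hquad x
      linarith
    have hnn : ∑ v, y v * y v = ∑ v, x v * x v :=
      Finset.sum_congr rfl fun v _ => hyabs v
    have heq : ∑ v, y v * (Q.mulVec y) v = q * ∑ v, y v * y v := by
      rw [hnn]
      have h1 : ∑ v, y v * (Q.mulVec y) v ≤ q * ∑ v, x v * x v := by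
        rw [← hxQx]; exact hyQy_le
      have h2 : q * ∑ v, x v * x v ≤ ∑ v, y v * (Q.mulVec y) v := by
        rw [← hnn] at *
        exact hlow
      linarith
    have hyev : Q.mulVec y = q • y := heqcase heq
    -- the difference vector
    set W : V → ℝ := fun v => x v - y v with hW
    have hWeqsub : W = x - y := rfl
    have hWev : Q.mulVec W = q • W := by
      rw [hWeqsub, Matrix.mulVec_sub, hev, hyev, ← smul_sub]
    have hWout : ∀ v, v ∉ B → W v = 0 := by
      intro v h; simp [hW, hyout v h]
    have hWs : W s = 0 := by simp [hW, hys, hxs]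
    have hWsign : ∀ v ∈ B, σ * ε v * W v ≤ 0 := by
      intro v hv
      have hWv : W v = x v - σ * ε v * |x v| := by simp [hW, hyB v hv]
      rw [hWv]
      rcases hσ with h | h <;> rcases hε1 v with h' | h' <;> rw [h, h'] <;>
        nlinarith [le_abs_self (x v), neg_abs_le (x v)]
    have hεne : ∀ v, σ * ε v ≠ 0 := by
      intro v
      rcases hσ with h | h <;> rcases hε1 v with h' | h' <;> rw [h, h'] <;> norm_num
    -- propagation of zeroes
    have hprop : ∀ v ∈ B, W v = 0 → ∀ u, G.Adj v u → W u = 0 := by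
      intro v hv hWv u hadj
      have hQWv : (Q.mulVec W) v = q * W v := by rw [hWev]; simp
      rw [hQmul W v, hWv] at hQWv
      have hsum : ∑ u' ∈ G.neighborFinset v, W u' = 0 := by
        simpa using hQWv
      have hterm : ∀ u' ∈ G.neighborFinset v, 0 ≤ σ * ε v * W u' := by
        intro u' hu'
        have hadj' : G.Adj v u' := (G.mem_neighborFinset _ _).1 hu'
        by_cases hb : u' ∈ B
        · have h1 := hWsign u' hb
          have h2 : ε u' = - ε v := hεadj v hv u' hb hadj'
          rw [h2] at h1
          nlinarith [h1]
        · rw [hWout u' hb, mul_zero]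
      have hall : ∀ u' ∈ G.neighborFinset v, σ * ε v * W u' = 0 := by
        have htot : ∑ u' ∈ G.neighborFinset v, σ * ε v * W u' = 0 := by
          rw [← Finset.mul_sum, hsum, mul_zero]
        exact fun u' hu' => (Finset.sum_eq_zero_iff_of_nonneg hterm).1 htot u' hu'
      by_cases hb : u ∈ B
      · have h0 := hall u ((G.mem_neighborFinset _ _).2 hadj)
        exact (mul_eq_zero.1 h0).resolve_left (hεne v)
      · exact hWout u hb
    -- propagate along walks from s
    have hwalk : ∀ (a b : V) (p : G.Walk a b), (a ∈ B → W a = 0) → (b ∈ B → W b = 0) := by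
      intro a b p
      induction p with
      | nil => exact id
      | @cons a' v' b' h p ih =>
        intro ha
        apply ih
        intro hvB
        by_cases huB : a' ∈ B
        · exact hprop a' huB (ha huB) v' h
        · by_cases hvs : v' = s
          · rw [hvs]; exact hWs
          · exact absurd h.symm (hbranch v' hvB hvs a' huB)
    have hWB : ∀ p ∈ B, W p = 0 := by
      intro p hp
      obtain ⟨w⟩ := hconn.preconnected s p
      exact hwalk s p w (fun _ => hWs) hp
    intro p hp
    have h0 := hWB p hp
    have : x p - σ * ε p * |x p| = 0 := by
      rw [← hyB p hp]; exact h0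
    linarith
  intro p hp
  have h1 := main 1 (Or.inl rfl) p hp
  have h2 := main (-1) (Or.inr rfl) p hp
  ring_nf at h1 h2
  linarith
end

section
/- Let G be a connected graph containing a bipartite branch H with root v_s, and let X be an eigenvector of Q(G) corresponding to q_min(G) with x_s ≠ 0. Then x_p ≠ 0 for every vertex p of H, and for every edge pt of H one has x_p · x_t < 0. -/
open Finset Matrix

lemma sl_isHermitian {V : Type*} [Fintype V] [DecidableEq V] (G : SimpleGraph V)
    [DecidableRel G.Adj] : (signlessLaplacian G).IsHermitian := by
  unfold signlessLaplacian Matrix.IsHermitian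
  ext i j
  simp only [Matrix.conjTranspose_apply, Matrix.add_apply, Matrix.diagonal_apply,
    SimpleGraph.adjMatrix_apply, star_trivial]
  by_cases h : i = j
  · subst h; simp
  · simp [h, Ne.symm h, G.adj_comm j i]
lemma deg_eq_sum {V : Type*} [Fintype V] [DecidableEq V] (G : SimpleGraph V)
    [DecidableRel G.Adj] (v : V) :
    (G.degree v : ℝ) = ∑ u, (if G.Adj v u then (1:ℝ) else 0) := by
  rw [Finset.sum_boole, SimpleGraph.degree, SimpleGraph.neighborFinset_eq_filter]

lemma sl_mulVec {V : Type*} [Fintype V] [DecidableEq V] (G : SimpleGraph V)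
    [DecidableRel G.Adj] (z : V → ℝ) (v : V) :
    (signlessLaplacian G).mulVec z v = (G.degree v : ℝ) * z v
      + ∑ u, (if G.Adj v u then z u else 0) := by
  rw [signlessLaplacian, Matrix.add_mulVec, Pi.add_apply, Matrix.mulVec_diagonal]
  congr 1
  rw [Matrix.mulVec, dotProduct]
  simp [SimpleGraph.adjMatrix_apply, ite_mul]

lemma quad_form {V : Type*} [Fintype V] [DecidableEq V] (G : SimpleGraph V)
    [DecidableRel G.Adj] (z : V → ℝ) :
    2 * (z ⬝ᵥ (signlessLaplacian G).mulVec z) =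
      ∑ v, ∑ u, (if G.Adj v u then (z v + z u)^2 else 0) := by
  have h1 : ∀ v u : V, (if G.Adj v u then (z v + z u)^2 else 0)
      = (if G.Adj v u then z v ^ 2 else 0) + (if G.Adj v u then z u ^ 2 else 0)
        + (if G.Adj v u then 2 * (z v * z u) else 0) := by
    intro v u; split <;> ring
  simp only [h1, Finset.sum_add_distrib]
  have h2 : ∑ v : V, ∑ u : V, (if G.Adj v u then z v ^ 2 else 0)
      = ∑ v : V, (G.degree v : ℝ) * z v ^ 2 := by
    refine Finset.sum_congr rfl fun v _ => ?_
    rw [deg_eq_sum, Finset.sum_mul]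
    exact Finset.sum_congr rfl fun u _ => by split <;> simp
  have h3 : ∑ v : V, ∑ u : V, (if G.Adj v u then z u ^ 2 else 0)
      = ∑ v : V, (G.degree v : ℝ) * z v ^ 2 := by
    rw [Finset.sum_comm]
    refine Finset.sum_congr rfl fun u _ => ?_
    rw [deg_eq_sum, Finset.sum_mul]
    refine Finset.sum_congr rfl fun v _ => ?_
    simp only [G.adj_comm u v]; by_cases h : G.Adj v u <;> simp [h]
  rw [h2, h3]
  simp only [dotProduct, sl_mulVec]
  rw [Finset.mul_sum]
  rw [← Finset.sum_add_distrib, ← Finset.sum_add_distrib]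
  refine Finset.sum_congr rfl fun v _ => ?_
  have h4 : ∑ u : V, (if G.Adj v u then 2 * (z v * z u) else 0)
      = 2 * z v * ∑ u : V, (if G.Adj v u then z u else 0) := by
    rw [Finset.mul_sum]
    exact Finset.sum_congr rfl fun u _ => by split <;> ring
  rw [h4]; ring

lemma spectral_aux {V : Type*} [Fintype V] [DecidableEq V] (M : Matrix V V ℝ)
    (hM : M.IsHermitian) (q : ℝ) (hq : ∀ i : V, q ≤ hM.eigenvalues i) (y : V → ℝ) :
    q * (y ⬝ᵥ y) ≤ y ⬝ᵥ M.mulVec y ∧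
    (y ⬝ᵥ M.mulVec y = q * (y ⬝ᵥ y) → M.mulVec y = q • y) := by
  classical
  set b := hM.eigenvectorBasis with hb
  set lam := hM.eigenvalues with hlam
  set y' : EuclideanSpace ℝ V := (WithLp.equiv 2 (V → ℝ)).symm y with hy'
  set c : V → ℝ := fun i => b.repr y' i with hc
  have hip : ∀ a w : EuclideanSpace ℝ V, (inner ℝ a w : ℝ) = (WithLp.equiv 2 (V → ℝ) a) ⬝ᵥ (WithLp.equiv 2 (V → ℝ) w) := by
    intro a w
    rw [EuclideanSpace.inner_eq_star_dotProduct, dotProduct_comm]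
    rfl
  -- y as a sum
  have hsum : ∑ i, c i • b i = y' := b.sum_repr y'
  have hfun : y = ∑ i, c i • (WithLp.equiv 2 (V → ℝ) (b i)) := by
    have := congrArg (WithLp.equiv 2 (V → ℝ)) hsum
    simpa [hy'] using this.symm
  -- mulVec of y
  have hMy : M.mulVec y = ∑ i, (lam i * c i) • (WithLp.equiv 2 (V → ℝ) (b i)) := by
    rw [hfun]
    rw [show M.mulVec = M.mulVecLin from rfl]
    rw [map_sum]
    refine Finset.sum_congr rfl fun i _ => ?_
    rw [_root_.map_smul, Matrix.mulVecLin_apply]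
    have := hM.mulVec_eigenvectorBasis i
    rw [show (⇑(b i) : V → ℝ) = WithLp.equiv 2 (V → ℝ) (b i) from rfl] at this
    rw [this, smul_smul, mul_comm]
  have hyb : ∀ i, (WithLp.equiv 2 (V → ℝ) (b i)) ⬝ᵥ y = c i := by
    intro i
    have : c i = inner ℝ (b i) y' := b.repr_apply_apply y' i
    rw [this, hip]
    rfl
  have hdotaux : ∀ (d : V → ℝ),
      y ⬝ᵥ (∑ i, d i • (WithLp.equiv 2 (V → ℝ) (b i))) = ∑ i, d i * c i := by
    intro d
    simp only [dotProduct, Finset.sum_apply, Pi.smul_apply, smul_eq_mul, Finset.mul_sum]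
    rw [Finset.sum_comm]
    refine Finset.sum_congr rfl fun i _ => ?_
    rw [← hyb i, dotProduct, Finset.mul_sum]
    refine Finset.sum_congr rfl fun v _ => by ring
  have hyy : y ⬝ᵥ y = ∑ i, c i * c i := by
    have := hdotaux c
    rw [← hfun] at this
    exact this
  have hMyd : y ⬝ᵥ M.mulVec y = ∑ i, (lam i * c i) * c i := by
    rw [hMy, hdotaux]
  have hpart1 : q * (y ⬝ᵥ y) ≤ y ⬝ᵥ M.mulVec y := by
    rw [hyy, hMyd, Finset.mul_sum]
    refine Finset.sum_le_sum fun i _ => ?_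
    nlinarith [hq i, mul_self_nonneg (c i)]
  refine ⟨hpart1, fun heq => ?_⟩
  have hsz : ∑ i, (lam i - q) * (c i * c i) = 0 := by
    have hsplit : ∑ i, (lam i - q) * (c i * c i)
        = (∑ i, (lam i * c i) * c i) - (∑ i, q * (c i * c i)) := by
      rw [← Finset.sum_sub_distrib]
      exact Finset.sum_congr rfl fun i _ => by ring
    rw [hsplit, ← hMyd, heq, hyy, Finset.mul_sum, sub_self]
  have hzero : ∀ i ∈ Finset.univ, (lam i - q) * (c i * c i) = 0 :=
    (Finset.sum_eq_zero_iff_of_nonneg (fun i _ => by nlinarith [hq i, mul_self_nonneg (c i)])).mp hsz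
  have hkey : ∀ i, lam i * c i = q * c i := by
    intro i
    rcases mul_eq_zero.mp (hzero i (Finset.mem_univ i)) with h | h
    · rw [sub_eq_zero.mp h]
    · rw [mul_self_eq_zero.mp h, mul_zero, mul_zero]
  rw [hMy, hfun, Finset.smul_sum]
  refine Finset.sum_congr rfl fun i _ => ?_
  rw [hkey i, smul_smul]
lemma dot_self_pos {V : Type*} [Fintype V] {z : V → ℝ} (hz : z ≠ 0) :
    0 < z ⬝ᵥ z := by
  obtain ⟨i, hi⟩ := Function.ne_iff.mp hz
  exact Finset.sum_pos' (fun j _ => mul_self_nonneg (z j))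
    ⟨i, Finset.mem_univ i, mul_self_pos.mpr hi⟩

lemma least_le {V : Type*} [Fintype V] [DecidableEq V] (M : Matrix V V ℝ) (hM : M.IsHermitian)
    (h0 : ∀ z : V → ℝ, 0 ≤ z ⬝ᵥ M.mulVec z) (i : V) :
    leastEigenvalue M ≤ hM.eigenvalues i := by
  apply csInf_le
  · refine ⟨0, fun μ hμ => ?_⟩
    obtain ⟨z, hz, hze⟩ := hμ
    have h1 : z ⬝ᵥ M.mulVec z = μ * (z ⬝ᵥ z) := by
      rw [hze, dotProduct_smul, smul_eq_mul]
    nlinarith [h0 z, dot_self_pos hz]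
  · refine ⟨WithLp.equiv 2 (V → ℝ) (hM.eigenvectorBasis i), ?_, hM.mulVec_eigenvectorBasis i⟩
    intro h
    exact hM.eigenvectorBasis.orthonormal.ne_zero i
      ((WithLp.equiv 2 (V → ℝ)).injective (by simpa using h))

/-- If `G` has a bipartite branch with vertex set `B` and root `s`, and `X` is an
eigenvector for the least eigenvalue of `Q(G)` with `x_s ≠ 0`, then `X` is nonzero on the
whole branch and `x_p · x_t < 0` for every edge `pt` of the branch. -/
theorem nonzero_branch {V : Type*} [Fintype V] [DecidableEq V] (G : SimpleGraph V)
    [DecidableRel G.Adj] (hconn : G.Connected)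
    (B : Set V) (s : V) (hs : s ∈ B)
    (hbranch : ∀ u ∈ B, u ≠ s → ∀ w ∉ B, ¬ G.Adj u w)
    (hbip : (G.induce B).Colorable 2)
    (x : V → ℝ) (hx : x ≠ 0)
    (hev : (signlessLaplacian G).mulVec x = leastEigenvalue (signlessLaplacian G) • x)
    (hxs : x s ≠ 0) :
    (∀ p ∈ B, x p ≠ 0) ∧ ∀ p ∈ B, ∀ t ∈ B, G.Adj p t → x p * x t < 0 := by
  classical
  set M := signlessLaplacian G with hMdef
  set q := leastEigenvalue M with hqdef
  have hherm : M.IsHermitian := sl_isHermitian G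
  have h0 : ∀ z : V → ℝ, 0 ≤ z ⬝ᵥ M.mulVec z := by
    intro z
    have h2 := quad_form G z
    have h3 : 0 ≤ ∑ v, ∑ u, (if G.Adj v u then (z v + z u)^2 else 0) :=
      Finset.sum_nonneg fun v _ => Finset.sum_nonneg fun u _ => by
        split
        · positivity
        · exact le_refl 0
    rw [← hMdef] at h2
    linarith
  have hql : ∀ i, q ≤ hherm.eigenvalues i := least_le M hherm h0
  obtain ⟨C⟩ := hbip
  set sgn : ℝ := x s / |x s| with hsgndef
  have habs : |x s| ≠ 0 := abs_ne_zero.mpr hxs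
  have hsgn2 : sgn * sgn = 1 := by
    rw [hsgndef, div_mul_div_comm, ← sq, ← sq, sq_abs, div_self (pow_ne_zero 2 hxs)]
  have hsgnabs : sgn * |x s| = x s := by
    rw [hsgndef, div_mul_eq_mul_div, mul_div_assoc, div_self habs, mul_one]
  have hsgn0 : sgn ≠ 0 := fun h => by rw [h, zero_mul] at hsgn2; norm_num at hsgn2
  set ε : V → ℝ := fun v => if h : v ∈ B then
      (if C ⟨v, h⟩ = C ⟨s, hs⟩ then sgn else -sgn) else 1 with hεdef
  set y : V → ℝ := fun v => if v ∈ B then ε v * |x v| else x v with hydef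
  have hε2 : ∀ v, ε v * ε v = 1 := by
    intro v
    simp only [hεdef]
    by_cases h : v ∈ B
    · rw [dif_pos h]
      split
      · exact hsgn2
      · rw [neg_mul_neg]; exact hsgn2
    · rw [dif_neg h, one_mul]
  have hys : y s = x s := by
    simp only [hydef]
    simp only [if_pos hs]
    simp only [hεdef]
    simp only [dif_pos hs, if_pos rfl]
    exact hsgnabs
  have hy2 : ∀ v, y v * y v = x v * x v := by
    intro v
    simp only [hydef]
    by_cases h : v ∈ B
    · simp only [if_pos h]
      have : (ε v * |x v|) * (ε v * |x v|) = (ε v * ε v) * (|x v| * |x v|) := by ring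
      rw [this, hε2, one_mul, abs_mul_abs_self]
    · simp only [if_neg h]
  have f2 : ∀ a b c : Fin 2, a ≠ b → (a = c ↔ ¬ b = c) := by decide
  have hopp : ∀ v (hv : v ∈ B) u (hu : u ∈ B), G.Adj v u → ε v = -ε u := by
    intro v hv u hu hadj
    have hadj' : (G.induce B).Adj ⟨v, hv⟩ ⟨u, hu⟩ := by simpa using hadj
    have hneq : C ⟨v, hv⟩ ≠ C ⟨u, hu⟩ := C.valid hadj'
    simp only [hεdef]
    simp only [dif_pos hv, dif_pos hu]
    by_cases hcv : C ⟨v, hv⟩ = C ⟨s, hs⟩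
    · rw [if_pos hcv, if_neg (((f2 _ _ _ hneq).mp hcv)), neg_neg]
    · rw [if_neg hcv, if_pos (not_not.mp (fun hcu => hcv ((f2 _ _ _ hneq).mpr hcu)))]
  have hedge : ∀ v u, G.Adj v u → (y v + y u)^2 ≤ (x v + x u)^2 := by
    intro v u hadj
    by_cases hv : v ∈ B <;> by_cases hu : u ∈ B
    · have hyv : y v = ε v * |x v| := by simp only [hydef]; simp [hv]
      have hyu : y u = -ε v * |x u| := by
        simp only [hydef]; simp only [if_pos hu]
        rw [hopp v hv u hu hadj]; ring
      rw [hyv, hyu]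
      have hsq : (ε v * |x v| + -ε v * |x u|)^2 = (ε v * ε v) * (|x v| - |x u|)^2 := by ring
      rw [hsq, hε2, one_mul]
      nlinarith [abs_mul_abs_self (x v), abs_mul_abs_self (x u),
        neg_abs_le (x v * x u), abs_mul (x v) (x u)]
    · have hvs : v = s := by
        by_contra h
        exact hbranch v hv h u hu hadj
      have hyv : y v = x v := by rw [hvs, hys]
      have hyu : y u = x u := by simp only [hydef]; simp [hu]
      rw [hyv, hyu]
    · have hus : u = s := by
        by_contra h
        exact hbranch u hu h v hv (hadj.symm)
      have hyu : y u = x u := by rw [hus, hys]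
      have hyv : y v = x v := by simp only [hydef]; simp [hv]
      rw [hyv, hyu]
    · have hyv : y v = x v := by simp only [hydef]; simp [hv]
      have hyu : y u = x u := by simp only [hydef]; simp [hu]
      rw [hyv, hyu]
  have hxq : x ⬝ᵥ M.mulVec x = q * (x ⬝ᵥ x) := by
    rw [hev, dotProduct_smul, smul_eq_mul]
  have hyyxx : y ⬝ᵥ y = x ⬝ᵥ x :=
    Finset.sum_congr rfl fun v _ => hy2 v
  have hFle : ∑ v, ∑ u, (if G.Adj v u then (y v + y u)^2 else 0)
      ≤ ∑ v, ∑ u, (if G.Adj v u then (x v + x u)^2 else 0) := by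
    refine Finset.sum_le_sum fun v _ => Finset.sum_le_sum fun u _ => ?_
    split
    · next h => exact hedge v u h
    · exact le_refl 0
  have hqy := quad_form G y
  have hqx := quad_form G x
  rw [← hMdef] at hqy hqx
  have hyMy_le : y ⬝ᵥ M.mulVec y ≤ x ⬝ᵥ M.mulVec x := by linarith
  have hlow : q * (y ⬝ᵥ y) ≤ y ⬝ᵥ M.mulVec y := (spectral_aux M hherm q hql y).1
  have heq : y ⬝ᵥ M.mulVec y = q * (y ⬝ᵥ y) := by
    rw [hyyxx] at hlow ⊢
    linarith [hxq]
  have heig : M.mulVec y = q • y := (spectral_aux M hherm q hql y).2 heq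
  -- per-edge equality
  have hFeq : ∑ v, ∑ u, (if G.Adj v u then (y v + y u)^2 else 0)
      = ∑ v, ∑ u, (if G.Adj v u then (x v + x u)^2 else 0) := by
    have : y ⬝ᵥ M.mulVec y = x ⬝ᵥ M.mulVec x := by rw [heq, hxq, hyyxx]
    linarith
  have hedgeq : ∀ v u, G.Adj v u → (y v + y u)^2 = (x v + x u)^2 := by
    have hsz : ∑ v, ∑ u, (if G.Adj v u then (x v + x u)^2 - (y v + y u)^2 else 0) = 0 := by
      have hsplit : ∑ v, ∑ u, (if G.Adj v u then (x v + x u)^2 - (y v + y u)^2 else 0)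
          = (∑ v, ∑ u, (if G.Adj v u then (x v + x u)^2 else 0))
            - (∑ v, ∑ u, (if G.Adj v u then (y v + y u)^2 else 0)) := by
        rw [← Finset.sum_sub_distrib]
        refine Finset.sum_congr rfl fun v _ => ?_
        rw [← Finset.sum_sub_distrib]
        refine Finset.sum_congr rfl fun u _ => ?_
        split <;> ring
      rw [hsplit, hFeq, sub_self]
    have hnn : ∀ v ∈ Finset.univ, ∀ u ∈ Finset.univ,
        (0:ℝ) ≤ (if G.Adj v u then (x v + x u)^2 - (y v + y u)^2 else 0) := by
      intro v _ u _
      split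
      · next h => linarith [hedge v u h]
      · exact le_refl 0
    have houter := (Finset.sum_eq_zero_iff_of_nonneg
      (fun v hv => Finset.sum_nonneg (fun u hu => hnn v hv u hu))).mp hsz
    intro v u hadj
    have hinner := (Finset.sum_eq_zero_iff_of_nonneg (hnn v (Finset.mem_univ v))).mp
      (houter v (Finset.mem_univ v)) u (Finset.mem_univ u)
    rw [if_pos hadj] at hinner
    linarith
  -- propagation of zeros
  have hys' : y s ≠ 0 := by rw [hys]; exact hxs
  have hprop : ∀ p, p ∈ B → p ≠ s → y p = 0 → ∀ u, G.Adj p u → u ∈ B ∧ y u = 0 := by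
    intro p hp hps hyp
    have hnbr : ∀ u, G.Adj p u → u ∈ B := by
      intro u hadj
      by_contra h
      exact hbranch p hp hps u h hadj
    have he := congrFun heig p
    rw [hMdef, sl_mulVec] at he
    have hqyp : (q • y) p = q * y p := rfl
    rw [hqyp, hyp, mul_zero, mul_zero, zero_add] at he
    set e : ℝ := if C ⟨p, hp⟩ = C ⟨s, hs⟩ then -sgn else sgn with hedef
    have he0 : e ≠ 0 := by
      simp only [hedef]; split
      · exact neg_ne_zero.mpr hsgn0
      · exact hsgn0
    have hyu : ∀ u, G.Adj p u → y u = e * |x u| := by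
      intro u hadj
      have hu := hnbr u hadj
      have hadj' : (G.induce B).Adj ⟨p, hp⟩ ⟨u, hu⟩ := by simpa using hadj
      have hneq : C ⟨p, hp⟩ ≠ C ⟨u, hu⟩ := C.valid hadj'
      simp only [hydef]
      simp only [if_pos hu]
      simp only [hεdef]
      simp only [dif_pos hu]
      simp only [hedef]
      by_cases hcp : C ⟨p, hp⟩ = C ⟨s, hs⟩
      · rw [if_pos hcp, if_neg ((f2 _ _ _ hneq).mp hcp)]
      · rw [if_neg hcp, if_pos (not_not.mp (fun hcu => hcp ((f2 _ _ _ hneq).mpr hcu)))]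
    have hsum0 : ∑ u, (if G.Adj p u then |x u| else 0) = 0 := by
      have h1 : ∑ u, (if G.Adj p u then y u else 0)
          = e * ∑ u, (if G.Adj p u then |x u| else 0) := by
        rw [Finset.mul_sum]
        refine Finset.sum_congr rfl fun u _ => ?_
        split
        · next h => rw [hyu u h]
        · rw [mul_zero]
      rw [he] at h1
      exact (mul_eq_zero.mp h1.symm).resolve_left he0
    have hall := (Finset.sum_eq_zero_iff_of_nonneg (fun u _ => by
      split
      · exact abs_nonneg _
      · exact le_refl 0)).mp hsum0
    intro u hadj
    have hu := hnbr u hadj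
    have := hall u (Finset.mem_univ u)
    rw [if_pos hadj] at this
    refine ⟨hu, ?_⟩
    simp only [hydef]
    simp only [if_pos hu]
    rw [this, mul_zero]
  have hwalk : ∀ (p r : V) (w : G.Walk p r), r = s → p ∈ B → y p = 0 → False := by
    intro p r w
    induction w with
    | nil => intro hr _ h0; exact hys' (hr ▸ h0)
    | cons hadj w ih =>
      intro hr hp h0
      have hps : _ ≠ s := fun h => hys' (h ▸ h0)
      obtain ⟨hv, hv0⟩ := hprop _ hp hps h0 _ hadj
      exact ih hr hv hv0
  have hnz : ∀ p ∈ B, x p ≠ 0 := by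
    intro p hp hp0
    have hyp0 : y p = 0 := by
      simp only [hydef]; simp only [if_pos hp]
      rw [hp0, abs_zero, mul_zero]
    exact hwalk p s (hconn.preconnected p s).some rfl hp hyp0
  refine ⟨hnz, fun p hp t ht hadj => ?_⟩
  have hyp : y p = ε p * |x p| := by simp only [hydef]; simp [hp]
  have hyt : y t = -ε p * |x t| := by
    simp only [hydef]; simp only [if_pos ht]
    rw [hopp p hp t ht hadj]; ring
  have h1 := hedgeq p t hadj
  rw [hyp, hyt] at h1
  have hsq : (ε p * |x p| + -ε p * |x t|)^2 = (ε p * ε p) * (|x p| - |x t|)^2 := by ring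
  rw [hsq, hε2, one_mul] at h1
  have hxp := abs_pos.mpr (hnz p hp)
  have hxt := abs_pos.mpr (hnz t ht)
  nlinarith [abs_mul_abs_self (x p), abs_mul_abs_self (x t), mul_pos hxp hxt]
end
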